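/- arXiv:1105.3656 — 8 statements merged into one kernel-verified Lean document; each statement's English description precedes it below -/
import Mathlib

section
/- (Proposition 2.2 (i): mass conservation.) For every f ∈ L²_M one has ∑' n, ∫ p, Q f n p = 0. -/
/-!
Writing `Q f n p = ∑' n', ∫ p', K n n' (p, p')`, the symmetry of `α` makes the integrand
antisymmetric: `K n n' (p, p') = -K n' n (p', p)`. Since `|f| ≤ (f² / M + M) / 2`, a function of
`L²_M` has `∑ ‖f n‖_{L¹} < ∞`, and as `α` is bounded and `∑ ‖M n‖_{L¹} < ∞`, the family `K` is
absolutely summable and integrable on `ℕ × ℕ × ℝ × ℝ`. By Fubini the total mass is then the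
unordered sum over pairs `(n, n')` of `∫∫ K n n'`, which vanishes by antisymmetry.
-/

open MeasureTheory Real

theorem tsum_eq_zero_of_antisymm {ι R : Type*} [Ring R] [NoZeroDivisors R] [CharZero R]
    [TopologicalSpace R] [IsTopologicalAddGroup R] [T2Space R] {G : ι × ι → R}
    (hG : ∀ i j, G (i, j) = -G (j, i)) : ∑' q, G q = 0 := by
  have h : ∑' q, G q = -∑' q, G q :=
    calc ∑' q, G q = ∑' q, G (q.2, q.1) := ((Equiv.prodComm ι ι).tsum_eq G).symm
      _ = ∑' q, -G q := tsum_congr fun q => hG q.2 q.1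
      _ = -∑' q, G q := tsum_neg
  exact CharZero.eq_neg_self_iff.1 h

theorem abs_le_sq_div_add_div_two {x M : ℝ} (hM : 0 < M) : |x| ≤ (x ^ 2 / M + M) / 2 := by
  have key : x ^ 2 / M + M - 2 * |x| = (|x| - M) ^ 2 / M := by
    field_simp
    rw [sub_sq, sq_abs]
    ring
  have : 0 ≤ (|x| - M) ^ 2 / M := by positivity
  linarith

section WeightedL2

variable {X : Type*} [MeasurableSpace X] {μ : Measure X} {f M : X → ℝ}

theorem integrable_of_integrable_sq_div (hM : ∀ x, 0 < M x) (hMi : Integrable M μ)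
    (hf : AEStronglyMeasurable f μ) (hfM : Integrable (fun x => f x ^ 2 / M x) μ) :
    Integrable f μ :=
  ((hfM.add hMi).div_const 2).mono' hf
    (.of_forall fun x => abs_le_sq_div_add_div_two (hM x))

theorem integral_norm_le_of_integrable_sq_div (hM : ∀ x, 0 < M x) (hMi : Integrable M μ)
    (hf : AEStronglyMeasurable f μ) (hfM : Integrable (fun x => f x ^ 2 / M x) μ) :
    ∫ x, ‖f x‖ ∂μ ≤ ((∫ x, f x ^ 2 / M x ∂μ) + ∫ x, M x ∂μ) / 2 := by
  rw [← integral_add hfM hMi, ← integral_div]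
  exact integral_mono (integrable_of_integrable_sq_div hM hMi hf hfM).norm
    ((hfM.add hMi).div_const 2) fun x => abs_le_sq_div_add_div_two (hM x)

end WeightedL2

theorem integral_tsum_integral_eq_tsum_integral_prod {ι X : Type*} [Countable ι]
    [MeasurableSpace X] {μ : Measure X} [SigmaFinite μ] {K : ι → X × X → ℝ}
    (hK : ∀ j, Integrable (K j) (μ.prod μ))
    (hs : Summable fun j => ∫ q, ‖K j q‖ ∂(μ.prod μ)) :
    ∫ p, ∑' j, ∫ p', K j (p, p') ∂μ ∂μ = ∑' j, ∫ q, K j q ∂(μ.prod μ) := by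
  have hbound : ∀ j, ∫ p, ‖∫ p', K j (p, p') ∂μ‖ ∂μ ≤ ∫ q, ‖K j q‖ ∂(μ.prod μ) := fun j =>
    calc ∫ p, ‖∫ p', K j (p, p') ∂μ‖ ∂μ ≤ ∫ p, ∫ p', ‖K j (p, p')‖ ∂μ ∂μ :=
          integral_mono (hK j).integral_prod_left.norm (hK j).integral_norm_prod_left
            fun p => norm_integral_le_integral_norm _
      _ = ∫ q, ‖K j q‖ ∂(μ.prod μ) := integral_integral (hK j).norm
  rw [← integral_tsum_of_summable_integral_norm (fun j => (hK j).integral_prod_left)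
    (hs.of_nonneg_of_le (fun j => integral_nonneg fun p => norm_nonneg _) hbound)]
  exact tsum_congr fun j => integral_integral (hK j)

namespace Collision

variable {ι X : Type*} (α : ι → ι → X → X → ℝ) (M f : ι → X → ℝ)

def integrand (i j : ι) (q : X × X) : ℝ :=
  α i j q.1 q.2 * (M i q.1 * f j q.2 - M j q.2 * f i q.1)

variable {α M f} {C : ℝ}

theorem norm_integrand_le (hαC : ∀ i j p p', |α i j p p'| ≤ C) (hM : ∀ i p, 0 ≤ M i p)
    (i j : ι) (q : X × X) :
    ‖integrand α M f i j q‖ ≤ C * (M i q.1 * ‖f j q.2‖ + ‖f i q.1‖ * M j q.2) := by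
  have hdiff : ‖M i q.1 * f j q.2 - M j q.2 * f i q.1‖ ≤
      M i q.1 * ‖f j q.2‖ + ‖f i q.1‖ * M j q.2 := by
    refine (norm_sub_le _ _).trans_eq ?_
    rw [norm_mul, norm_mul, Real.norm_of_nonneg (hM i q.1), Real.norm_of_nonneg (hM j q.2),
      mul_comm (M j q.2)]
  rw [integrand, norm_mul]
  exact mul_le_mul (hαC i j q.1 q.2) hdiff (norm_nonneg _)
    ((abs_nonneg _).trans (hαC i j q.1 q.2))

variable [MeasurableSpace X] {μ : Measure X} [SigmaFinite μ]

theorem integrable_integrand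
    (hα : ∀ i j, AEStronglyMeasurable (fun q : X × X => α i j q.1 q.2) (μ.prod μ))
    (hαC : ∀ i j p p', |α i j p p'| ≤ C) (hM : ∀ i, Integrable (M i) μ)
    (hf : ∀ i, Integrable (f i) μ) (i j : ι) :
    Integrable (integrand α M f i j) (μ.prod μ) :=
  (((hM i).mul_prod (hf j)).sub (((hM j).mul_prod (hf i)).swap)).bdd_mul (hα i j)
    (.of_forall fun q => hαC i j q.1 q.2)

theorem integral_norm_integrand_le
    (hα : ∀ i j, AEStronglyMeasurable (fun q : X × X => α i j q.1 q.2) (μ.prod μ))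
    (hαC : ∀ i j p p', |α i j p p'| ≤ C) (hMpos : ∀ i p, 0 ≤ M i p)
    (hM : ∀ i, Integrable (M i) μ) (hf : ∀ i, Integrable (f i) μ) (i j : ι) :
    ∫ q, ‖integrand α M f i j q‖ ∂(μ.prod μ) ≤
      C * ((∫ p, M i p ∂μ) * (∫ p, ‖f j p‖ ∂μ) + (∫ p, ‖f i p‖ ∂μ) * ∫ p, M j p ∂μ) := by
  have hMf := (hM i).mul_prod (hf j).norm
  have hfM := (hf i).norm.mul_prod (hM j)
  rw [← integral_prod_mul, ← integral_prod_mul, ← integral_add hMf hfM, ← integral_const_mul]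
  exact integral_mono (integrable_integrand hα hαC hM hf i j).norm ((hMf.add hfM).const_mul C)
    (norm_integrand_le hαC hMpos i j)

theorem integral_integrand_swap (hsym : ∀ i j p p', α i j p p' = α j i p' p) (i j : ι) :
    ∫ q, integrand α M f i j q ∂(μ.prod μ) = -∫ q, integrand α M f j i q ∂(μ.prod μ) := by
  rw [← integral_prod_swap, ← integral_neg]
  congr 1 with q
  simp only [integrand, Prod.fst_swap, Prod.snd_swap, hsym i j q.2 q.1]
  ring

theorem tsum_integral_tsum_integral_eq_zero [Countable ι]
    (hα : ∀ i j, AEStronglyMeasurable (fun q : X × X => α i j q.1 q.2) (μ.prod μ))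
    (hαC : ∀ i j p p', |α i j p p'| ≤ C) (hsym : ∀ i j p p', α i j p p' = α j i p' p)
    (hMpos : ∀ i p, 0 < M i p) (hM : ∀ i, Integrable (M i) μ)
    (hMs : Summable fun i => ∫ p, M i p ∂μ) (hf : ∀ i, AEStronglyMeasurable (f i) μ)
    (hfM : ∀ i, Integrable (fun p => f i p ^ 2 / M i p) μ)
    (hfs : Summable fun i => ∫ p, f i p ^ 2 / M i p ∂μ) :
    ∑' i, ∫ p, ∑' j, ∫ p', α i j p p' * (M i p * f j p' - M j p' * f i p) ∂μ ∂μ = 0 := by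
  have hfi i := integrable_of_integrable_sq_div (hMpos i) (hM i) (hf i) (hfM i)
  have hMnn i p := (hMpos i p).le
  have hMint_nn i : 0 ≤ ∫ p, M i p ∂μ := integral_nonneg (hMnn i)
  have hfnorm_nn i : 0 ≤ ∫ p, ‖f i p‖ ∂μ := integral_nonneg fun p => norm_nonneg _
  have hfnorm_s : Summable fun i => ∫ p, ‖f i p‖ ∂μ :=
    ((hfs.add hMs).div_const 2).of_nonneg_of_le hfnorm_nn
      fun i => integral_norm_le_of_integrable_sq_div (hMpos i) (hM i) (hf i) (hfM i)
  have hs : Summable fun q : ι × ι => ∫ z, ‖integrand α M f q.1 q.2 z‖ ∂(μ.prod μ) :=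
    (((hMs.mul_of_nonneg hfnorm_s hMint_nn hfnorm_nn).add
      (hfnorm_s.mul_of_nonneg hMs hfnorm_nn hMint_nn)).mul_left C).of_nonneg_of_le
      (fun q => integral_nonneg fun z => norm_nonneg _)
      fun q => integral_norm_integrand_le hα hαC hMnn hM hfi q.1 q.2
  have hG : Summable fun q : ι × ι => ∫ z, integrand α M f q.1 q.2 z ∂(μ.prod μ) :=
    hs.of_norm_bounded fun q => norm_integral_le_integral_norm _
  calc _ = ∑' i, ∑' j, ∫ z, integrand α M f i j z ∂(μ.prod μ) :=
        tsum_congr fun i => integral_tsum_integral_eq_tsum_integral_prod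
          (integrable_integrand hα hαC hM hfi i) (hs.prod_factor i)
    _ = ∑' q : ι × ι, ∫ z, integrand α M f q.1 q.2 z ∂(μ.prod μ) := hG.tsum_prod.symm
    _ = 0 := tsum_eq_zero_of_antisymm (integral_integrand_swap hsym)

end Collision

section Maxwellian

noncomputable def maxwellian (m e Z p : ℝ) : ℝ :=
  Real.exp (-(p ^ 2 / (2 * m) + e)) / (Real.sqrt (2 * Real.pi * m) * Z)

variable {m Z : ℝ} (e : ℝ)

theorem maxwellian_eq_mul_gaussian (hm : 0 < m) :
    maxwellian m e Z = fun p =>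
      Real.exp (-e) / (Real.sqrt (2 * Real.pi * m) * Z) * Real.exp (-(1 / (2 * m)) * p ^ 2) := by
  ext p
  rw [maxwellian, div_mul_eq_mul_div, ← Real.exp_add]
  congr 2
  field_simp
  ring

theorem maxwellian_pos (hm : 0 < m) (hZ : 0 < Z) (p : ℝ) : 0 < maxwellian m e Z p :=
  div_pos (Real.exp_pos _) (mul_pos (Real.sqrt_pos.2 (by positivity)) hZ)

theorem integrable_maxwellian (hm : 0 < m) : Integrable (maxwellian m e Z) := by
  rw [maxwellian_eq_mul_gaussian e hm]
  exact (integrable_exp_neg_mul_sq (by positivity)).const_mul _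

theorem integral_maxwellian (hm : 0 < m) : ∫ p, maxwellian m e Z p = Real.exp (-e) / Z := by
  have hs : Real.sqrt (2 * Real.pi * m) ≠ 0 := (Real.sqrt_pos.2 (by positivity)).ne'
  rw [maxwellian_eq_mul_gaussian e hm, integral_const_mul, integral_gaussian,
    show Real.pi / (1 / (2 * m)) = 2 * Real.pi * m by field_simp]
  field_simp

end Maxwellian

theorem stmt3_general
    (m ε : ℕ → ℝ)
    (hm : ∀ n, 0 < m n)
    (hε : Summable fun n => Real.exp (-ε n))
    (Z : ℝ) (hZ : Z = ∑' n, Real.exp (-ε n))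
    (M : ℕ → ℝ → ℝ)
    (hM : ∀ n p, M n p =
      Real.exp (-(p ^ 2 / (2 * m n) + ε n)) / (Real.sqrt (2 * Real.pi * m n) * Z))
    (α : ℕ → ℕ → ℝ → ℝ → ℝ)
    (hαmeas : ∀ n n', Measurable fun q : ℝ × ℝ => α n n' q.1 q.2)
    (α₁ α₂ : ℝ) (hα₁ : 0 < α₁)
    (hsym : ∀ n n' p p', α n n' p p' = α n' n p' p)
    (hbd : ∀ n n' p p', α₁ ≤ α n n' p p' ∧ α n n' p p' ≤ α₂)
    (Q : (ℕ → ℝ → ℝ) → ℕ → ℝ → ℝ)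
    (hQ : ∀ f n p, Q f n p =
      ∑' n', ∫ p', α n n' p p' * (M n p * f n' p' - M n' p' * f n p))
    (memL2M : (ℕ → ℝ → ℝ) → Prop)
    (hmem : ∀ f, memL2M f ↔ (∀ n, Measurable (f n)) ∧
      (∀ n, Integrable fun p => f n p ^ 2 / M n p) ∧
      (Summable fun n => ∫ p, f n p ^ 2 / M n p)) :
    ∀ f, memL2M f → (∑' n, ∫ p, Q f n p) = 0 := by
  intro f hf
  obtain ⟨hfm, hfM, hfs⟩ := (hmem f).1 hf
  have hZpos : 0 < Z := hZ ▸ hε.tsum_pos (fun n => (Real.exp_pos _).le) 0 (Real.exp_pos _)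
  have hαC n n' p p' : |α n n' p p'| ≤ α₂ := by
    obtain ⟨h₁, h₂⟩ := hbd n n' p p'
    exact abs_le.2 ⟨by linarith, h₂⟩
  obtain rfl : M = fun n => maxwellian (m n) (ε n) Z := funext₂ hM
  have hMs : Summable fun n => ∫ p, maxwellian (m n) (ε n) Z p := by
    simpa only [integral_maxwellian _ (hm _)] using hε.div_const Z
  simp only [hQ]
  exact Collision.tsum_integral_tsum_integral_eq_zero
    (fun n n' => (hαmeas n n').aestronglyMeasurable) hαC hsym
    (fun n => maxwellian_pos _ (hm n) hZpos) (fun n => integrable_maxwellian _ (hm n)) hMs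
    (fun n => (hfm n).aestronglyMeasurable) hfM hfs

theorem stmt3
    (m ε : ℕ → ℝ)
    (hm : ∀ n, 0 < m n)
    (hε : Summable fun n => Real.exp (-ε n))
    (Z : ℝ) (hZ : Z = ∑' n, Real.exp (-ε n))
    (M : ℕ → ℝ → ℝ)
    (hM : ∀ n p, M n p =
      Real.exp (-(p ^ 2 / (2 * m n) + ε n)) / (Real.sqrt (2 * Real.pi * m n) * Z))
    (hMnorm : (∑' n, ∫ p, M n p) = 1)
    (α : ℕ → ℕ → ℝ → ℝ → ℝ)
    (hαmeas : ∀ n n', Measurable fun q : ℝ × ℝ => α n n' q.1 q.2)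
    (α₁ α₂ : ℝ) (hα₁ : 0 < α₁) (hα₁₂ : α₁ ≤ α₂)
    (hsym : ∀ n n' p p', α n n' p p' = α n' n p' p)
    (hbd : ∀ n n' p p', α₁ ≤ α n n' p p' ∧ α n n' p p' ≤ α₂)
    (Q : (ℕ → ℝ → ℝ) → ℕ → ℝ → ℝ)
    (hQ : ∀ f n p, Q f n p =
      ∑' n', ∫ p', α n n' p p' * (M n p * f n' p' - M n' p' * f n p))
    (memL2M : (ℕ → ℝ → ℝ) → Prop)
    (hmem : ∀ f, memL2M f ↔ (∀ n, Measurable (f n)) ∧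
      (∀ n, Integrable fun p => f n p ^ 2 / M n p) ∧
      (Summable fun n => ∫ p, f n p ^ 2 / M n p))
    (nrm : (ℕ → ℝ → ℝ) → ℝ)
    (hnrm : ∀ f, nrm f = (∑' n, ∫ p, f n p ^ 2 / M n p) ^ ((1 : ℝ) / 2)) :
    ∀ f, memL2M f → (∑' n, ∫ p, Q f n p) = 0 :=
  stmt3_general m ε hm hε Z hZ M hM α hαmeas α₁ α₂ hα₁ hsym hbd Q hQ memL2M hmem
end

section
/- (Proposition 2.2 (ii): boundedness.) There exists a constant C ≥ 0 (one may take C = 2 * α₂) such that for every f ∈ L²_M the family Q f belongs to L²_M and ‖Q f‖_M ≤ C * ‖f‖_M. -/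
/-!
Since the weights have total mass `∑ₙ ∫ Mₙ = 1`, Cauchy–Schwarz gives `K := ∑ₙ ∫ |fₙ| ≤ ‖f‖_M`.
Bounding the cross section by `α₂` gives `|Q f n p| ≤ α₂ (Mₙ(p) K + |fₙ(p)|)`, hence
`(Q f n p)² / Mₙ(p) ≤ α₂² (K² Mₙ(p) + 2K |fₙ(p)| + fₙ(p)² / Mₙ(p))`; integrating and summing over `n`
yields `‖Q f‖²_M ≤ α₂² (K² + 2K² + ‖f‖²_M) ≤ (2α₂)² ‖f‖²_M`.
-/

open MeasureTheory Real

lemma abs_le_half_mul_sq_div_add_div (x : ℝ) {w t : ℝ} (hw : 0 < w) (ht : 0 < t) :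
    |x| ≤ (t * (x ^ 2 / w) + w / t) / 2 := by
  have key : 2 * (t * w) * |x| ≤ t ^ 2 * x ^ 2 + w ^ 2 := by
    nlinarith [sq_nonneg (t * |x| - w), sq_abs x]
  rw [le_div_iff₀ two_pos]
  calc |x| * 2 = 2 * (t * w) * |x| / (t * w) := by field_simp
    _ ≤ (t ^ 2 * x ^ 2 + w ^ 2) / (t * w) := by gcongr
    _ = t * (x ^ 2 / w) + w / t := by field_simp

lemma sq_div_le_of_abs_le {q x w A K : ℝ} (hw : 0 < w) (h : |q| ≤ A * (w * K + |x|)) :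
    q ^ 2 / w ≤ A ^ 2 * (K ^ 2 * w + 2 * K * |x| + x ^ 2 / w) := by
  have hq : q ^ 2 ≤ (A * (w * K + |x|)) ^ 2 := by
    simpa only [sq_abs] using pow_le_pow_left₀ (abs_nonneg q) h 2
  calc q ^ 2 / w ≤ (A * (w * K + |x|)) ^ 2 / w := by gcongr
    _ = A ^ 2 * (K ^ 2 * w + 2 * K * |x| + x ^ 2 / w) := by
      field_simp
      linear_combination A ^ 2 * sq_abs x

noncomputable section WeightedL2

variable {X : Type*} [MeasurableSpace X] {μ : Measure X}

lemma integral_abs_le_of_integrable_sq_div {g w : X → ℝ} (hw : ∀ p, 0 < w p)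
    (hwi : Integrable w μ) (hg : Integrable (fun p => g p ^ 2 / w p) μ) {t : ℝ} (ht : 0 < t) :
    ∫ p, |g p| ∂μ ≤ (t * ∫ p, g p ^ 2 / w p ∂μ + (∫ p, w p ∂μ) / t) / 2 := by
  calc ∫ p, |g p| ∂μ ≤ ∫ p, (t * (g p ^ 2 / w p) + w p / t) / 2 ∂μ :=
        integral_mono_of_nonneg (ae_of_all _ fun p => abs_nonneg _)
          (((hg.const_mul t).add (hwi.div_const t)).div_const 2)
          (ae_of_all _ fun p => abs_le_half_mul_sq_div_add_div (g p) (hw p) ht)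
    _ = _ := by
      rw [integral_div, integral_add (hg.const_mul t) (hwi.div_const t), integral_const_mul,
        integral_div]

lemma integrable_of_integrable_sq_div_s4 {g w : X → ℝ} (hw : ∀ p, 0 < w p)
    (hwi : Integrable w μ) (hgm : AEStronglyMeasurable g μ)
    (hg : Integrable (fun p => g p ^ 2 / w p) μ) : Integrable g μ :=
  Integrable.mono' ((hg.add hwi).div_const 2) hgm <| ae_of_all _ fun p => by
    simpa using abs_le_half_mul_sq_div_add_div (g p) (hw p) one_pos

/-- The Maxwellians `M n` only enter through these properties. -/
structure IsNormalizedWeight (μ : Measure X) (M : ℕ → X → ℝ) : Prop where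
  pos : ∀ n p, 0 < M n p
  measurable : ∀ n, Measurable (M n)
  integrable : ∀ n, Integrable (M n) μ
  hasSum_integral : HasSum (fun n => ∫ p, M n p ∂μ) 1

structure MemL2M (μ : Measure X) (M f : ℕ → X → ℝ) : Prop where
  measurable : ∀ n, Measurable (f n)
  integrable_sq_div : ∀ n, Integrable (fun p => f n p ^ 2 / M n p) μ
  summable : Summable fun n => ∫ p, f n p ^ 2 / M n p ∂μ

lemma memL2M_iff {M f : ℕ → X → ℝ} : MemL2M μ M f ↔ (∀ n, Measurable (f n)) ∧
    (∀ n, Integrable (fun p => f n p ^ 2 / M n p) μ) ∧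
    Summable fun n => ∫ p, f n p ^ 2 / M n p ∂μ :=
  ⟨fun h => ⟨h.1, h.2, h.3⟩, fun ⟨h₁, h₂, h₃⟩ => ⟨h₁, h₂, h₃⟩⟩

def weightedSqNorm (μ : Measure X) (M f : ℕ → X → ℝ) : ℝ :=
  ∑' n, ∫ p, f n p ^ 2 / M n p ∂μ

def collisionTerm (μ : Measure X) (α : ℕ → ℕ → X → X → ℝ) (M f : ℕ → X → ℝ)
    (n n' : ℕ) (p : X) : ℝ :=
  ∫ p', α n n' p p' * (M n p * f n' p' - M n' p' * f n p) ∂μ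

def collision (μ : Measure X) (α : ℕ → ℕ → X → X → ℝ) (M f : ℕ → X → ℝ) (n : ℕ) (p : X) : ℝ :=
  ∑' n', collisionTerm μ α M f n n' p

variable {M f : ℕ → X → ℝ}

lemma MemL2M.integrable (hM : IsNormalizedWeight μ M) (hf : MemL2M μ M f) (n : ℕ) :
    Integrable (f n) μ :=
  integrable_of_integrable_sq_div_s4 (hM.pos n) (hM.integrable n)
    (hf.measurable n).aestronglyMeasurable (hf.integrable_sq_div n)

lemma MemL2M.summable_integral_abs (hM : IsNormalizedWeight μ M) (hf : MemL2M μ M f) :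
    Summable fun n => ∫ p, |f n p| ∂μ := by
  refine .of_nonneg_of_le (fun n => integral_nonneg fun p => abs_nonneg _)
    (fun n => integral_abs_le_of_integrable_sq_div (hM.pos n) (hM.integrable n)
      (hf.integrable_sq_div n) one_pos) ?_
  exact ((hf.summable.mul_left 1).add (hM.hasSum_integral.summable.div_const 1)).div_const 2

/-- Cauchy–Schwarz against the weights, which have total mass one. -/
lemma MemL2M.sq_tsum_integral_abs_le (hM : IsNormalizedWeight μ M) (hf : MemL2M μ M f) :
    (∑' n, ∫ p, |f n p| ∂μ) ^ 2 ≤ weightedSqNorm μ M f := by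
  set K := ∑' n, ∫ p, |f n p| ∂μ
  set S := weightedSqNorm μ M f
  have hS : 0 ≤ S := tsum_nonneg fun n =>
    integral_nonneg fun p => div_nonneg (sq_nonneg _) (hM.pos n p).le
  have hK : ∀ t, 0 < t → K ≤ (t * S + 1 / t) / 2 := by
    intro t ht
    have hsum := ((hf.summable.mul_left t).add
      (hM.hasSum_integral.summable.div_const t)).div_const 2
    calc K ≤ ∑' n, (t * ∫ p, f n p ^ 2 / M n p ∂μ + (∫ p, M n p ∂μ) / t) / 2 :=
          Summable.tsum_le_tsum (fun n => integral_abs_le_of_integrable_sq_div (hM.pos n)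
            (hM.integrable n) (hf.integrable_sq_div n) ht) (hf.summable_integral_abs hM) hsum
      _ = (t * S + 1 / t) / 2 := by
        rw [tsum_div_const, (hf.summable.mul_left t).tsum_add
          (hM.hasSum_integral.summable.div_const t), tsum_mul_left, tsum_div_const,
          hM.hasSum_integral.tsum_eq]
        rfl
  have hK0 : 0 ≤ K := tsum_nonneg fun n => integral_nonneg fun p => abs_nonneg (f n p)
  rcases hK0.eq_or_lt with hKzero | hKpos
  · rw [← hKzero]; simpa using hS
  · -- optimal choice `t = 1 / K`
    have := hK (1 / K) (by positivity)
    field_simp at this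
    linarith

lemma abs_integral_mul_sub_le {a u v : X → ℝ} {A c d : ℝ} (ha : ∀ p, |a p| ≤ A)
    (hu : Integrable u μ) (hv : Integrable v μ) (hc : 0 ≤ c) (hv₀ : ∀ p, 0 ≤ v p) :
    |∫ p, a p * (c * u p - v p * d) ∂μ| ≤ A * (c * ∫ p, |u p| ∂μ + (∫ p, v p ∂μ) * |d|) := by
  have hbound : Integrable (fun p => A * (c * |u p| + v p * |d|)) μ :=
    ((hu.abs.const_mul c).add (hv.mul_const |d|)).const_mul A
  calc |∫ p, a p * (c * u p - v p * d) ∂μ| ≤ ∫ p, |a p * (c * u p - v p * d)| ∂μ :=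
        abs_integral_le_integral_abs
    _ ≤ ∫ p, A * (c * |u p| + v p * |d|) ∂μ := by
        refine integral_mono_of_nonneg (ae_of_all _ fun p => abs_nonneg _) hbound
          (ae_of_all _ fun p => ?_)
        have hsub : |c * u p - v p * d| ≤ c * |u p| + v p * |d| := by
          simpa only [abs_mul, abs_of_nonneg hc, abs_of_nonneg (hv₀ p)] using
            abs_sub (c * u p) (v p * d)
        simp only [abs_mul]
        exact mul_le_mul (ha p) hsub (abs_nonneg _) ((abs_nonneg _).trans (ha p))
    _ = A * (c * ∫ p, |u p| ∂μ + (∫ p, v p ∂μ) * |d|) := by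
        rw [integral_const_mul, integral_add (hu.abs.const_mul c) (hv.mul_const |d|),
          integral_const_mul, integral_mul_const]

variable {α : ℕ → ℕ → X → X → ℝ} {A : ℝ}

lemma abs_collision_le (hM : IsNormalizedWeight μ M) (hf : MemL2M μ M f)
    (hα : ∀ n n' p p', |α n n' p p'| ≤ A) (n : ℕ) (p : X) :
    |collision μ α M f n p| ≤ A * (M n p * ∑' n', ∫ p', |f n' p'| ∂μ + |f n p|) := by
  have hsum : HasSum (fun n' => A * (M n p * ∫ p', |f n' p'| ∂μ + (∫ p', M n' p' ∂μ) * |f n p|))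
      (A * (M n p * ∑' n', ∫ p', |f n' p'| ∂μ + |f n p|)) := by
    simpa using (((hf.summable_integral_abs hM).hasSum.mul_left (M n p)).add
      (hM.hasSum_integral.mul_right |f n p|)).mul_left A
  refine tsum_of_norm_bounded (f := fun n' => collisionTerm μ α M f n n' p) hsum fun n' => ?_
  exact abs_integral_mul_sub_le (hα n n' p)
    (hf.integrable hM n') (hM.integrable n') (hM.pos n p).le fun p' => (hM.pos n' p').le

lemma measurable_collision [SFinite μ] (hM : IsNormalizedWeight μ M) (hf : MemL2M μ M f)
    (hα : ∀ n n', Measurable fun q : X × X => α n n' q.1 q.2) (n : ℕ) :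
    Measurable (collision μ α M f n) :=
  Measurable.tsum fun n' => StronglyMeasurable.measurable <|
    StronglyMeasurable.integral_prod_right' (f := fun q : X × X =>
      α n n' q.1 q.2 * (M n q.1 * f n' q.2 - M n' q.2 * f n q.1)) <|
    Measurable.stronglyMeasurable <| by
      have := hM.measurable; have := hf.measurable; fun_prop

lemma sq_div_collision_le (hM : IsNormalizedWeight μ M) (hf : MemL2M μ M f)
    (hα : ∀ n n' p p', |α n n' p p'| ≤ A) (n : ℕ) (p : X) :
    collision μ α M f n p ^ 2 / M n p ≤ A ^ 2 * ((∑' n', ∫ p', |f n' p'| ∂μ) ^ 2 * M n p +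
      2 * (∑' n', ∫ p', |f n' p'| ∂μ) * |f n p| + f n p ^ 2 / M n p) :=
  sq_div_le_of_abs_le (hM.pos n p) (abs_collision_le hM hf hα n p)

lemma integrable_collision_bound (hM : IsNormalizedWeight μ M) (hf : MemL2M μ M f) (A K : ℝ)
    (n : ℕ) :
    Integrable (fun p => A ^ 2 * (K ^ 2 * M n p + 2 * K * |f n p| + f n p ^ 2 / M n p)) μ :=
  ((((hM.integrable n).const_mul _).add ((hf.integrable hM n).abs.const_mul _)).add
    (hf.integrable_sq_div n)).const_mul _

lemma integrable_sq_div_collision [SFinite μ] (hM : IsNormalizedWeight μ M) (hf : MemL2M μ M f)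
    (hαm : ∀ n n', Measurable fun q : X × X => α n n' q.1 q.2)
    (hα : ∀ n n' p p', |α n n' p p'| ≤ A) (n : ℕ) :
    Integrable (fun p => collision μ α M f n p ^ 2 / M n p) μ := by
  refine (integrable_collision_bound hM hf A (∑' n', ∫ p', |f n' p'| ∂μ) n).mono'
    (((measurable_collision hM hf hαm n).pow_const 2).div (hM.measurable n)).aestronglyMeasurable
    (ae_of_all _ fun p => ?_)
  rw [Real.norm_of_nonneg (div_nonneg (sq_nonneg _) (hM.pos n p).le)]
  exact sq_div_collision_le hM hf hα n p

lemma integral_sq_div_collision_le [SFinite μ] (hM : IsNormalizedWeight μ M) (hf : MemL2M μ M f)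
    (hαm : ∀ n n', Measurable fun q : X × X => α n n' q.1 q.2)
    (hα : ∀ n n' p p', |α n n' p p'| ≤ A) (n : ℕ) :
    ∫ p, collision μ α M f n p ^ 2 / M n p ∂μ ≤
      A ^ 2 * ((∑' n', ∫ p', |f n' p'| ∂μ) ^ 2 * ∫ p, M n p ∂μ +
        2 * (∑' n', ∫ p', |f n' p'| ∂μ) * ∫ p, |f n p| ∂μ + ∫ p, f n p ^ 2 / M n p ∂μ) := by
  set K := ∑' n', ∫ p', |f n' p'| ∂μ
  have hMK : Integrable (fun p => K ^ 2 * M n p) μ := (hM.integrable n).const_mul _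
  have hfK : Integrable (fun p => 2 * K * |f n p|) μ := (hf.integrable hM n).abs.const_mul _
  refine (integral_mono (integrable_sq_div_collision hM hf hαm hα n)
    (integrable_collision_bound hM hf A K n) (sq_div_collision_le hM hf hα n)).trans_eq ?_
  rw [integral_const_mul,
    integral_add (f := fun p => K ^ 2 * M n p + 2 * K * |f n p|) (hMK.add hfK)
      (hf.integrable_sq_div n),
    integral_add hMK hfK, integral_const_mul, integral_const_mul]

lemma hasSum_integral_collision_bound (hM : IsNormalizedWeight μ M) (hf : MemL2M μ M f) (A : ℝ) :
    HasSum (fun n => A ^ 2 * ((∑' n', ∫ p', |f n' p'| ∂μ) ^ 2 * ∫ p, M n p ∂μ +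
        2 * (∑' n', ∫ p', |f n' p'| ∂μ) * ∫ p, |f n p| ∂μ + ∫ p, f n p ^ 2 / M n p ∂μ))
      (A ^ 2 * ((∑' n', ∫ p', |f n' p'| ∂μ) ^ 2 * 1 +
        2 * (∑' n', ∫ p', |f n' p'| ∂μ) * (∑' n', ∫ p', |f n' p'| ∂μ) + weightedSqNorm μ M f)) :=
  (((hM.hasSum_integral.mul_left _).add ((hf.summable_integral_abs hM).hasSum.mul_left _)).add
    hf.summable.hasSum).mul_left _

lemma memL2M_collision [SFinite μ] (hM : IsNormalizedWeight μ M) (hf : MemL2M μ M f)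
    (hαm : ∀ n n', Measurable fun q : X × X => α n n' q.1 q.2)
    (hα : ∀ n n' p p', |α n n' p p'| ≤ A) : MemL2M μ M (collision μ α M f) :=
  ⟨measurable_collision hM hf hαm, integrable_sq_div_collision hM hf hαm hα,
    .of_nonneg_of_le (fun n => integral_nonneg fun p => div_nonneg (sq_nonneg _) (hM.pos n p).le)
      (integral_sq_div_collision_le hM hf hαm hα) (hasSum_integral_collision_bound hM hf A).summable⟩

lemma MemL2M.weightedSqNorm_collision_le [SFinite μ] (hM : IsNormalizedWeight μ M)
    (hf : MemL2M μ M f) (hαm : ∀ n n', Measurable fun q : X × X => α n n' q.1 q.2)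
    (hα : ∀ n n' p p', |α n n' p p'| ≤ A) :
    weightedSqNorm μ M (collision μ α M f) ≤ (2 * A) ^ 2 * weightedSqNorm μ M f := by
  have hK := hf.sq_tsum_integral_abs_le hM
  calc weightedSqNorm μ M (collision μ α M f)
      ≤ _ := Summable.tsum_le_tsum (integral_sq_div_collision_le hM hf hαm hα)
        (memL2M_collision hM hf hαm hα).summable (hasSum_integral_collision_bound hM hf A).summable
    _ = _ := (hasSum_integral_collision_bound hM hf A).tsum_eq
    _ ≤ (2 * A) ^ 2 * weightedSqNorm μ M f := by nlinarith [sq_nonneg A]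

end WeightedL2

lemma integrable_exp_neg_sq_div_add {m : ℝ} (hm : 0 < m) (e : ℝ) :
    Integrable fun p : ℝ => exp (-(p ^ 2 / (2 * m) + e)) := by
  refine ((integrable_exp_neg_mul_sq (b := 1 / (2 * m)) (by positivity)).const_mul
    (exp (-e))).congr (ae_of_all _ fun p => ?_)
  simp only [← exp_add]
  congr 1
  ring

lemma isNormalizedWeight_maxwellian {m ε : ℕ → ℝ} {Z : ℝ} {M : ℕ → ℝ → ℝ} (hm : ∀ n, 0 < m n)
    (hZ : 0 < Z)
    (hM : ∀ n p, M n p = exp (-(p ^ 2 / (2 * m n) + ε n)) / (sqrt (2 * π * m n) * Z))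
    (hMnorm : ∑' n, ∫ p, M n p = 1) : IsNormalizedWeight volume M where
  pos n p := by
    have := hm n
    rw [hM]
    positivity
  measurable n := by
    rw [funext (hM n)]
    fun_prop
  integrable n := by
    rw [funext (hM n)]
    exact (integrable_exp_neg_sq_div_add (hm n) (ε n)).div_const _
  hasSum_integral := by
    have : Summable fun n => ∫ p, M n p := by
      by_contra h
      rw [tsum_eq_zero_of_not_summable h] at hMnorm
      exact zero_ne_one hMnorm
    exact hMnorm ▸ this.hasSum

theorem stmt4_general
    (m ε : ℕ → ℝ)
    (hm : ∀ n, 0 < m n)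
    (hε : Summable fun n => Real.exp (-ε n))
    (Z : ℝ) (hZ : Z = ∑' n, Real.exp (-ε n))
    (M : ℕ → ℝ → ℝ)
    (hM : ∀ n p, M n p =
      Real.exp (-(p ^ 2 / (2 * m n) + ε n)) / (Real.sqrt (2 * Real.pi * m n) * Z))
    (hMnorm : (∑' n, ∫ p, M n p) = 1)
    (α : ℕ → ℕ → ℝ → ℝ → ℝ)
    (hαmeas : ∀ n n', Measurable fun q : ℝ × ℝ => α n n' q.1 q.2)
    (α₁ α₂ : ℝ) (hα₁ : 0 < α₁) (hα₁₂ : α₁ ≤ α₂)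
    (hbd : ∀ n n' p p', α₁ ≤ α n n' p p' ∧ α n n' p p' ≤ α₂)
    (Q : (ℕ → ℝ → ℝ) → ℕ → ℝ → ℝ)
    (hQ : ∀ f n p, Q f n p =
      ∑' n', ∫ p', α n n' p p' * (M n p * f n' p' - M n' p' * f n p))
    (memL2M : (ℕ → ℝ → ℝ) → Prop)
    (hmem : ∀ f, memL2M f ↔ (∀ n, Measurable (f n)) ∧
      (∀ n, Integrable fun p => f n p ^ 2 / M n p) ∧
      (Summable fun n => ∫ p, f n p ^ 2 / M n p))
    (nrm : (ℕ → ℝ → ℝ) → ℝ)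
    (hnrm : ∀ f, nrm f = (∑' n, ∫ p, f n p ^ 2 / M n p) ^ ((1 : ℝ) / 2)) :
    ∃ C : ℝ, C = 2 * α₂ ∧ 0 ≤ C ∧
      ∀ f, memL2M f → memL2M (Q f) ∧ nrm (Q f) ≤ C * nrm f := by
  have hZpos : 0 < Z := hZ ▸ hε.tsum_pos (fun n => (exp_pos _).le) 0 (exp_pos _)
  have hMw := isNormalizedWeight_maxwellian hm hZpos hM hMnorm
  have hα : ∀ n n' p p', |α n n' p p'| ≤ α₂ := fun n n' p p' =>
    abs_le.2 ⟨by linarith [hbd n n' p p'], (hbd n n' p p').2⟩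
  have hQf : ∀ f, Q f = collision volume α M f := fun f => funext fun n => funext (hQ f n)
  have hmem' : ∀ f, memL2M f ↔ MemL2M volume M f := fun f => (hmem f).trans memL2M_iff.symm
  have hnrm' : ∀ f, nrm f = sqrt (weightedSqNorm volume M f) := fun f => by
    rw [hnrm, sqrt_eq_rpow, weightedSqNorm]
  refine ⟨2 * α₂, rfl, by linarith, fun f hf => ?_⟩
  rw [hmem'] at hf
  rw [hQf, hmem', hnrm', hnrm']
  refine ⟨memL2M_collision hMw hf hαmeas hα, ?_⟩
  calc sqrt (weightedSqNorm volume M (collision volume α M f))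
      ≤ sqrt ((2 * α₂) ^ 2 * weightedSqNorm volume M f) :=
        sqrt_le_sqrt (hf.weightedSqNorm_collision_le hMw hαmeas hα)
    _ = 2 * α₂ * sqrt (weightedSqNorm volume M f) := by
        rw [sqrt_mul (sq_nonneg _), sqrt_sq (by linarith)]

theorem stmt4
    (m ε : ℕ → ℝ)
    (hm : ∀ n, 0 < m n)
    (hε : Summable fun n => Real.exp (-ε n))
    (Z : ℝ) (hZ : Z = ∑' n, Real.exp (-ε n))
    (M : ℕ → ℝ → ℝ)
    (hM : ∀ n p, M n p =
      Real.exp (-(p ^ 2 / (2 * m n) + ε n)) / (Real.sqrt (2 * Real.pi * m n) * Z))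
    (hMnorm : (∑' n, ∫ p, M n p) = 1)
    (α : ℕ → ℕ → ℝ → ℝ → ℝ)
    (hαmeas : ∀ n n', Measurable fun q : ℝ × ℝ => α n n' q.1 q.2)
    (α₁ α₂ : ℝ) (hα₁ : 0 < α₁) (hα₁₂ : α₁ ≤ α₂)
    (hsym : ∀ n n' p p', α n n' p p' = α n' n p' p)
    (hbd : ∀ n n' p p', α₁ ≤ α n n' p p' ∧ α n n' p p' ≤ α₂)
    (Q : (ℕ → ℝ → ℝ) → ℕ → ℝ → ℝ)
    (hQ : ∀ f n p, Q f n p =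
      ∑' n', ∫ p', α n n' p p' * (M n p * f n' p' - M n' p' * f n p))
    (memL2M : (ℕ → ℝ → ℝ) → Prop)
    (hmem : ∀ f, memL2M f ↔ (∀ n, Measurable (f n)) ∧
      (∀ n, Integrable fun p => f n p ^ 2 / M n p) ∧
      (Summable fun n => ∫ p, f n p ^ 2 / M n p))
    (nrm : (ℕ → ℝ → ℝ) → ℝ)
    (hnrm : ∀ f, nrm f = (∑' n, ∫ p, f n p ^ 2 / M n p) ^ ((1 : ℝ) / 2)) :
    ∃ C : ℝ, C = 2 * α₂ ∧ 0 ≤ C ∧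
      ∀ f, memL2M f → memL2M (Q f) ∧ nrm (Q f) ≤ C * nrm f :=
  stmt4_general m ε hm hε Z hZ M hM hMnorm α hαmeas α₁ α₂ hα₁ hα₁₂ hbd Q hQ memL2M hmem nrm hnrm
end

section
/- (Proposition 2.2 (iii): kernel of the collision operator.) Let f ∈ L²_M. Then Q f n p = 0 for every n and almost every p ∈ ℝ if and only if there exists a real number N such that for every n, f n p = N * M n p for almost every p ∈ ℝ. -/
open MeasureTheory Real

/-!
With `h = f / M`, the symmetry of `α` turns `⟨Q f, f⟩_M` into
`-½ ∑ₙ ∑ₙ' ∫∫ α M M' (h' - h)²`. The interchanges of sums and integrals behind this are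
justified because `α` is bounded and `f ∈ L²_M` lies in `ℓ¹(L¹)`, by `2 |f| ≤ f² / M + M`.
If `Q f = 0` the right-hand side vanishes, and since `α, M > 0` the ratio `h` is a.e. one
constant on all bands. Conversely `Q (N M) = 0` since its integrand vanishes identically.
-/

def SummablyIntegrable {κ Y : Type*} [MeasurableSpace Y] (F : κ → Y → ℝ) (ν : Measure Y) :
    Prop :=
  (∀ q, Integrable (F q) ν) ∧ Summable fun q => ∫ y, ‖F q y‖ ∂ν

lemma two_mul_norm_le_sq_div_add {x M : ℝ} (hM : 0 < M) : 2 * ‖x‖ ≤ x ^ 2 / M + M := by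
  rw [Real.norm_eq_abs, div_add' _ _ _ hM.ne', le_div_iff₀ hM]
  nlinarith [sq_nonneg (|x| - M), sq_abs x]

namespace SummablyIntegrable

section Basic

variable {κ Y : Type*} [MeasurableSpace Y] {ν : Measure Y} {F G : κ → Y → ℝ}

lemma of_nonneg (hF : ∀ q, Integrable (F q) ν) (hs : Summable fun q => ∫ y, F q y ∂ν)
    (hnn : ∀ q y, 0 ≤ F q y) : SummablyIntegrable F ν :=
  ⟨hF, hs.congr fun q => integral_congr_ae <| ae_of_all _ fun y => by
    simp only [Real.norm_of_nonneg (hnn q y)]⟩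

lemma congr (hF : SummablyIntegrable F ν) (h : ∀ q y, F q y = G q y) :
    SummablyIntegrable G ν :=
  (funext fun q => funext (h q) : F = G) ▸ hF

lemma summable_integral (hF : SummablyIntegrable F ν) : Summable fun q => ∫ y, F q y ∂ν :=
  hF.2.of_norm_bounded fun _ => norm_integral_le_integral_norm _

lemma neg (hF : SummablyIntegrable F ν) : SummablyIntegrable (fun q y => -F q y) ν :=
  ⟨fun q => (hF.1 q).neg, by simpa only [norm_neg] using hF.2⟩

lemma add (hF : SummablyIntegrable F ν) (hG : SummablyIntegrable G ν) :
    SummablyIntegrable (fun q y => F q y + G q y) ν := by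
  refine ⟨fun q => (hF.1 q).add (hG.1 q), (hF.2.add hG.2).of_nonneg_of_le
    (fun _ => integral_nonneg fun _ => norm_nonneg _) fun q => ?_⟩
  rw [← integral_add (hF.1 q).norm (hG.1 q).norm]
  exact integral_mono ((hF.1 q).add (hG.1 q)).norm ((hF.1 q).norm.add (hG.1 q).norm)
    fun y => norm_add_le _ _

lemma sub (hF : SummablyIntegrable F ν) (hG : SummablyIntegrable G ν) :
    SummablyIntegrable (fun q y => F q y - G q y) ν :=
  (hF.add hG.neg).congr fun _ _ => (sub_eq_add_neg _ _).symm

lemma mono (hG : SummablyIntegrable G ν) (hF : ∀ q, AEStronglyMeasurable (F q) ν)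
    (hle : ∀ q y, ‖F q y‖ ≤ G q y) : SummablyIntegrable F ν := by
  have hFi q : Integrable (F q) ν := (hG.1 q).mono' (hF q) (ae_of_all _ (hle q))
  exact ⟨hFi, hG.summable_integral.of_nonneg_of_le
    (fun _ => integral_nonneg fun _ => norm_nonneg _)
    fun q => integral_mono (hFi q).norm (hG.1 q) (hle q)⟩

lemma tsum_integral_add (hF : SummablyIntegrable F ν) (hG : SummablyIntegrable G ν) :
    ∑' q, ∫ y, (F q y + G q y) ∂ν = ∑' q, ∫ y, F q y ∂ν + ∑' q, ∫ y, G q y ∂ν := by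
  rw [← hF.summable_integral.tsum_add hG.summable_integral]
  exact tsum_congr fun q => integral_add (hF.1 q) (hG.1 q)

lemma ae_eq_zero_of_tsum_integral_eq_zero (hF : SummablyIntegrable F ν)
    (hnn : ∀ q, 0 ≤ᵐ[ν] F q) (h0 : ∑' q, ∫ y, F q y ∂ν = 0) (q : κ) : F q =ᵐ[ν] 0 := by
  have hsum : HasSum (fun q => ∫ y, F q y ∂ν) 0 := h0 ▸ hF.summable_integral.hasSum
  rw [hasSum_zero_iff_of_nonneg fun q => integral_nonneg_of_ae (hnn q)] at hsum
  exact (integral_eq_zero_iff_of_nonneg_ae (hnn q) (hF.1 q)).1 (congrFun hsum q)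

lemma of_sq_div {M : κ → Y → ℝ} (hF : ∀ n, AEStronglyMeasurable (F n) ν)
    (hMpos : ∀ n y, 0 < M n y) (hM : SummablyIntegrable M ν)
    (hg : SummablyIntegrable (fun n y => F n y ^ 2 / M n y) ν) : SummablyIntegrable F ν :=
  (hg.add hM).mono hF fun n y => by
    linarith [two_mul_norm_le_sq_div_add (x := F n y) (hMpos n y), norm_nonneg (F n y)]

end Basic

section Prod

variable {ι κ X Y : Type*} [MeasurableSpace X] [MeasurableSpace Y]
  {μ : Measure X} {ν : Measure Y} [SFinite μ] [SFinite ν]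

lemma kernel_mul {k : ι × κ → X × Y → ℝ} {C : ℝ}
    (hk : ∀ q, AEStronglyMeasurable (k q) (μ.prod ν)) (hkC : ∀ q z, ‖k q z‖ ≤ C)
    {u : ι → X → ℝ} {v : κ → Y → ℝ} (hu : SummablyIntegrable u μ)
    (hv : SummablyIntegrable v ν) :
    SummablyIntegrable (fun (q : ι × κ) (z : X × Y) => k q z * (u q.1 z.1 * v q.2 z.2))
      (μ.prod ν) := by
  have huv (q : ι × κ) : Integrable (fun z : X × Y => u q.1 z.1 * v q.2 z.2) (μ.prod ν) :=
    (hu.1 q.1).mul_prod (hv.1 q.2)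
  refine ⟨fun q => (huv q).bdd_mul (hk q) (ae_of_all _ (hkC q)), ?_⟩
  refine ((hu.2.mul_of_nonneg hv.2 (fun _ => integral_nonneg fun _ => norm_nonneg _)
    fun _ => integral_nonneg fun _ => norm_nonneg _).mul_left C).of_nonneg_of_le
    (fun _ => integral_nonneg fun _ => norm_nonneg _) fun q => ?_
  calc ∫ z, ‖k q z * (u q.1 z.1 * v q.2 z.2)‖ ∂(μ.prod ν)
      ≤ ∫ z, C * (‖u q.1 z.1‖ * ‖v q.2 z.2‖) ∂(μ.prod ν) := by
        refine integral_mono ((huv q).bdd_mul (hk q) (ae_of_all _ (hkC q))).norm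
          (((hu.1 q.1).norm.mul_prod (hv.1 q.2).norm).const_mul C) fun z => ?_
        simp only [norm_mul]
        gcongr
        exact hkC q z
    _ = C * ((∫ x, ‖u q.1 x‖ ∂μ) * ∫ y, ‖v q.2 y‖ ∂ν) := by
        rw [integral_const_mul, integral_prod_mul (fun x => ‖u q.1 x‖) fun y => ‖v q.2 y‖]

lemma prod_swap {F : ι × κ → X × Y → ℝ} (hF : SummablyIntegrable F (μ.prod ν)) :
    SummablyIntegrable (fun (q : κ × ι) (z : Y × X) => F q.swap z.swap) (ν.prod μ) :=
  ⟨fun q => (hF.1 q.swap).swap, ((Equiv.prodComm κ ι).summable_iff.2 hF.2).congr fun q =>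
    (integral_prod_swap fun z => ‖F q.swap z‖).symm⟩

lemma tsum_integral_tsum_integral [Countable κ] {F : ι × κ → X × Y → ℝ}
    (hF : SummablyIntegrable F (μ.prod ν)) :
    ∑' i, ∫ x, ∑' k, ∫ y, F (i, k) (x, y) ∂ν ∂μ = ∑' q, ∫ z, F q z ∂(μ.prod ν) := by
  rw [hF.summable_integral.tsum_prod' hF.summable_integral.prod_factor]
  refine tsum_congr fun i => ?_
  have hnorm k : ∫ x, ‖∫ y, F (i, k) (x, y) ∂ν‖ ∂μ ≤ ∫ z, ‖F (i, k) z‖ ∂(μ.prod ν) := by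
    rw [integral_prod _ (hF.1 (i, k)).norm]
    exact integral_mono (hF.1 (i, k)).integral_prod_left.norm
      (hF.1 (i, k)).integral_norm_prod_left fun x => norm_integral_le_integral_norm _
  rw [← integral_tsum_of_summable_integral_norm (fun k => (hF.1 (i, k)).integral_prod_left)
    ((hF.2.prod_factor i).of_nonneg_of_le (fun _ => integral_nonneg fun _ => norm_nonneg _)
      hnorm)]
  exact tsum_congr fun k => (integral_prod _ (hF.1 (i, k))).symm

end Prod

end SummablyIntegrable

lemma tsum_integral_prod_swap {ι κ X Y : Type*} [MeasurableSpace X] [MeasurableSpace Y]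
    {μ : Measure X} {ν : Measure Y} [SFinite μ] [SFinite ν] (F : ι × κ → X × Y → ℝ) :
    ∑' q : κ × ι, ∫ z : Y × X, F q.swap z.swap ∂(ν.prod μ) = ∑' q, ∫ z, F q z ∂(μ.prod ν) := by
  simp_rw [integral_prod_swap (F _)]
  exact (Equiv.prodComm κ ι).tsum_eq fun q => ∫ z, F q z ∂(μ.prod ν)

lemma exists_ae_eq_const_of_forall_ae_prod_eq {ι X β : Type*} [MeasurableSpace X]
    {μ : Measure X} [SFinite μ] [NeZero μ] [Nonempty ι] {h : ι → X → β}
    (hh : ∀ a b, ∀ᵐ z ∂(μ.prod μ), h b z.2 = h a z.1) : ∃ c, ∀ n, ∀ᵐ x ∂μ, h n x = c := by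
  let i := Classical.arbitrary ι
  have hi a : ∀ᵐ x ∂μ, ∀ᵐ y ∂μ, h i y = h a x := Measure.ae_ae_of_ae_prod (hh a i)
  obtain ⟨x₀, hx₀⟩ := (hi i).exists
  refine ⟨h i x₀, fun n => ?_⟩
  filter_upwards [hi n] with x hx
  obtain ⟨y, hyx, hyx₀⟩ := (hx.and hx₀).exists
  rw [← hyx, hyx₀]

noncomputable def collisionOp {ι X : Type*} [MeasurableSpace X] (μ : Measure X)
    (α : ι → ι → X → X → ℝ) (M f : ι → X → ℝ) (n : ι) (p : X) : ℝ :=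
  ∑' n', ∫ p', α n n' p p' * (M n p * f n' p' - M n' p' * f n p) ∂μ

section CollisionAlgebra

variable {ι X : Type*} {α : ι → ι → X → X → ℝ} {M f : ι → X → ℝ}

noncomputable def collisionPairing (α : ι → ι → X → X → ℝ) (M f : ι → X → ℝ) (q : ι × ι)
    (z : X × X) : ℝ :=
  α q.1 q.2 z.1 z.2 * (M q.1 z.1 * f q.2 z.2 - M q.2 z.2 * f q.1 z.1) * (f q.1 z.1 / M q.1 z.1)

noncomputable def dissipationDensity (α : ι → ι → X → X → ℝ) (M f : ι → X → ℝ) (q : ι × ι)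
    (z : X × X) : ℝ :=
  α q.1 q.2 z.1 z.2 * M q.1 z.1 * M q.2 z.2 * (f q.2 z.2 / M q.2 z.2 - f q.1 z.1 / M q.1 z.1) ^ 2

lemma collisionPairing_eq (hMpos : ∀ n p, 0 < M n p) (q : ι × ι) (z : X × X) :
    collisionPairing α M f q z = α q.1 q.2 z.1 z.2 * (f q.1 z.1 * f q.2 z.2)
      - α q.1 q.2 z.1 z.2 * (f q.1 z.1 ^ 2 / M q.1 z.1 * M q.2 z.2) := by
  have := (hMpos q.1 z.1).ne'
  rw [collisionPairing]
  field_simp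

lemma collisionPairing_add_swap (hsym : ∀ n n' p p', α n n' p p' = α n' n p' p)
    (hMpos : ∀ n p, 0 < M n p) (q : ι × ι) (z : X × X) :
    collisionPairing α M f q z + collisionPairing α M f q.swap z.swap =
      -dissipationDensity α M f q z := by
  have := (hMpos q.1 z.1).ne'
  have := (hMpos q.2 z.2).ne'
  simp only [collisionPairing, dissipationDensity, Prod.fst_swap, Prod.snd_swap]
  rw [hsym q.2]
  field_simp
  ring

end CollisionAlgebra

section Collision

variable {ι X : Type*} [MeasurableSpace X] {μ : Measure X}
  {α : ι → ι → X → X → ℝ} {M f : ι → X → ℝ}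

lemma collisionOp_ae_eq_zero_of_ae_eq_const_mul {N : ℝ}
    (hf : ∀ n, ∀ᵐ p ∂μ, f n p = N * M n p) (n : ι) :
    ∀ᵐ p ∂μ, collisionOp μ α M f n p = 0 := by
  filter_upwards [hf n] with p hp
  refine (tsum_congr fun n' => ?_).trans tsum_zero
  refine integral_eq_zero_of_ae ?_
  filter_upwards [hf n'] with p' hp'
  simp only [hp, hp', Pi.zero_apply]
  ring

lemma collisionOp_mul_div (n : ι) (p : X) :
    collisionOp μ α M f n p * (f n p / M n p) =
      ∑' n', ∫ p', collisionPairing α M f (n, n') (p, p') ∂μ := by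
  rw [collisionOp, ← tsum_mul_right]
  exact tsum_congr fun n' => (integral_mul_const _ _).symm

variable [SFinite μ] {C : ℝ}

lemma summablyIntegrable_collisionPairing
    (hα : ∀ n n', Measurable fun z : X × X => α n n' z.1 z.2)
    (hαC : ∀ n n' p p', |α n n' p p'| ≤ C) (hMpos : ∀ n p, 0 < M n p)
    (hM : SummablyIntegrable M μ) (hf : SummablyIntegrable f μ)
    (hg : SummablyIntegrable (fun n p => f n p ^ 2 / M n p) μ) :
    SummablyIntegrable (collisionPairing α M f) (μ.prod μ) := by
  have hk (q : ι × ι) := (hα q.1 q.2).aestronglyMeasurable (μ := μ.prod μ)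
  have hkC (q : ι × ι) (z : X × X) := (Real.norm_eq_abs _).trans_le (hαC q.1 q.2 z.1 z.2)
  exact ((hf.kernel_mul hk hkC hf).sub (hg.kernel_mul hk hkC hM)).congr
    fun q z => (collisionPairing_eq hMpos q z).symm

lemma summablyIntegrable_dissipationDensity
    (hα : ∀ n n', Measurable fun z : X × X => α n n' z.1 z.2)
    (hαC : ∀ n n' p p', |α n n' p p'| ≤ C) (hsym : ∀ n n' p p', α n n' p p' = α n' n p' p)
    (hMpos : ∀ n p, 0 < M n p) (hM : SummablyIntegrable M μ) (hf : SummablyIntegrable f μ)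
    (hg : SummablyIntegrable (fun n p => f n p ^ 2 / M n p) μ) :
    SummablyIntegrable (dissipationDensity α M f) (μ.prod μ) := by
  have hP := summablyIntegrable_collisionPairing hα hαC hMpos hM hf hg
  exact (hP.add hP.prod_swap).neg.congr fun q z => by
    rw [collisionPairing_add_swap hsym hMpos, neg_neg]

theorem tsum_integral_collisionOp_mul_div [Countable ι]
    (hα : ∀ n n', Measurable fun z : X × X => α n n' z.1 z.2)
    (hαC : ∀ n n' p p', |α n n' p p'| ≤ C) (hsym : ∀ n n' p p', α n n' p p' = α n' n p' p)
    (hMpos : ∀ n p, 0 < M n p) (hM : SummablyIntegrable M μ) (hf : SummablyIntegrable f μ)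
    (hg : SummablyIntegrable (fun n p => f n p ^ 2 / M n p) μ) :
    ∑' n, ∫ p, collisionOp μ α M f n p * (f n p / M n p) ∂μ =
      -(∑' q, ∫ z, dissipationDensity α M f q z ∂(μ.prod μ)) / 2 := by
  have hP := summablyIntegrable_collisionPairing hα hαC hMpos hM hf hg
  set P := collisionPairing α M f
  calc ∑' n, ∫ p, collisionOp μ α M f n p * (f n p / M n p) ∂μ
      = ∑' q, ∫ z, P q z ∂(μ.prod μ) := by
        simp_rw [collisionOp_mul_div]
        exact hP.tsum_integral_tsum_integral
    _ = (∑' q, ∫ z, P q z ∂(μ.prod μ)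
          + ∑' q : ι × ι, ∫ z : X × X, P q.swap z.swap ∂(μ.prod μ)) / 2 := by
        rw [tsum_integral_prod_swap]
        ring
    _ = (∑' q, ∫ z, (P q z + P q.swap z.swap) ∂(μ.prod μ)) / 2 := by
        rw [hP.tsum_integral_add hP.prod_swap]
    _ = -(∑' q, ∫ z, dissipationDensity α M f q z ∂(μ.prod μ)) / 2 := by
        simp_rw [P, collisionPairing_add_swap hsym hMpos, integral_neg, tsum_neg]

theorem exists_ae_eq_const_mul_of_collisionOp_ae_eq_zero [Countable ι] [Nonempty ι] [NeZero μ]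
    (hα : ∀ n n', Measurable fun z : X × X => α n n' z.1 z.2)
    (hαpos : ∀ n n' p p', 0 < α n n' p p') (hαC : ∀ n n' p p', |α n n' p p'| ≤ C)
    (hsym : ∀ n n' p p', α n n' p p' = α n' n p' p)
    (hMpos : ∀ n p, 0 < M n p) (hM : SummablyIntegrable M μ) (hf : SummablyIntegrable f μ)
    (hg : SummablyIntegrable (fun n p => f n p ^ 2 / M n p) μ)
    (hQ : ∀ n, ∀ᵐ p ∂μ, collisionOp μ α M f n p = 0) :
    ∃ N : ℝ, ∀ n, ∀ᵐ p ∂μ, f n p = N * M n p := by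
  have hD := summablyIntegrable_dissipationDensity hα hαC hsym hMpos hM hf hg
  have hD0 : ∑' q, ∫ z, dissipationDensity α M f q z ∂(μ.prod μ) = 0 := by
    have hQ0 n : ∫ p, collisionOp μ α M f n p * (f n p / M n p) ∂μ = 0 :=
      integral_eq_zero_of_ae <| (hQ n).mono fun p hp => by simp [hp]
    have := tsum_integral_collisionOp_mul_div hα hαC hsym hMpos hM hf hg
    simp only [hQ0, tsum_zero] at this
    linarith
  have hnn q : 0 ≤ᵐ[μ.prod μ] dissipationDensity α M f q := ae_of_all _ fun z => by
    unfold dissipationDensity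
    have := hαpos q.1 q.2 z.1 z.2
    have := hMpos q.1 z.1
    have := hMpos q.2 z.2
    positivity
  have hratio a b : ∀ᵐ z ∂(μ.prod μ), f b z.2 / M b z.2 = f a z.1 / M a z.1 := by
    filter_upwards [hD.ae_eq_zero_of_tsum_integral_eq_zero hnn hD0 (a, b)] with z hz
    simpa [dissipationDensity, sub_eq_zero, (hαpos a b z.1 z.2).ne', (hMpos a z.1).ne',
      (hMpos b z.2).ne'] using hz
  obtain ⟨N, hN⟩ := exists_ae_eq_const_of_forall_ae_prod_eq
    (h := fun n p => f n p / M n p) hratio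
  exact ⟨N, fun n => (hN n).mono fun p hp => by rw [← hp, div_mul_cancel₀ _ (hMpos n p).ne']⟩

end Collision

lemma integrable_exp_neg_sq_div_add_div {m : ℝ} (hm : 0 < m) (ε c : ℝ) :
    Integrable fun p : ℝ => exp (-(p ^ 2 / (2 * m) + ε)) / c := by
  refine ((integrable_exp_neg_mul_sq (b := 1 / (2 * m)) (by positivity)).mul_const
    (exp (-ε) / c)).congr (ae_of_all _ fun p => ?_)
  simp only [neg_add, exp_add]
  ring_nf

theorem stmt7_general
    (m ε : ℕ → ℝ)
    (hm : ∀ n, 0 < m n)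
    (hε : Summable fun n => Real.exp (-ε n))
    (Z : ℝ) (hZ : Z = ∑' n, Real.exp (-ε n))
    (M : ℕ → ℝ → ℝ)
    (hM : ∀ n p, M n p =
      Real.exp (-(p ^ 2 / (2 * m n) + ε n)) / (Real.sqrt (2 * Real.pi * m n) * Z))
    (hMnorm : (∑' n, ∫ p, M n p) = 1)
    (α : ℕ → ℕ → ℝ → ℝ → ℝ)
    (hαmeas : ∀ n n', Measurable fun q : ℝ × ℝ => α n n' q.1 q.2)
    (α₁ α₂ : ℝ) (hα₁ : 0 < α₁)
    (hsym : ∀ n n' p p', α n n' p p' = α n' n p' p)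
    (hbd : ∀ n n' p p', α₁ ≤ α n n' p p' ∧ α n n' p p' ≤ α₂)
    (Q : (ℕ → ℝ → ℝ) → ℕ → ℝ → ℝ)
    (hQ : ∀ f n p, Q f n p =
      ∑' n', ∫ p', α n n' p p' * (M n p * f n' p' - M n' p' * f n p))
    (memL2M : (ℕ → ℝ → ℝ) → Prop)
    (hmem : ∀ f, memL2M f ↔ (∀ n, Measurable (f n)) ∧
      (∀ n, Integrable fun p => f n p ^ 2 / M n p) ∧
      (Summable fun n => ∫ p, f n p ^ 2 / M n p)) :
    ∀ f, memL2M f →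
      ((∀ n, ∀ᵐ p ∂(volume : Measure ℝ), Q f n p = 0) ↔
        ∃ N : ℝ, ∀ n, ∀ᵐ p ∂(volume : Measure ℝ), f n p = N * M n p) := by
  intro f hf
  obtain ⟨hfmeas, hgint, hgsum⟩ := (hmem f).1 hf
  have hZpos : 0 < Z := hZ ▸ hε.tsum_pos (fun _ => (exp_pos _).le) 0 (exp_pos _)
  have hMpos n p : 0 < M n p := by
    rw [hM]
    exact div_pos (exp_pos _) (mul_pos (sqrt_pos.2 (by have := hm n; positivity)) hZpos)
  have hMsum : Summable fun n => ∫ p, M n p := by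
    by_contra h
    simp [tsum_eq_zero_of_not_summable h] at hMnorm
  have hMint : SummablyIntegrable M volume :=
    .of_nonneg (fun n => (funext (hM n)).symm ▸ integrable_exp_neg_sq_div_add_div (hm n) _ _)
      hMsum fun n p => (hMpos n p).le
  have hg : SummablyIntegrable (fun n p => f n p ^ 2 / M n p) volume :=
    .of_nonneg hgint hgsum fun n p => div_nonneg (sq_nonneg _) (hMpos n p).le
  have hαpos n n' p p' : 0 < α n n' p p' := hα₁.trans_le (hbd n n' p p').1
  have hαC n n' p p' : |α n n' p p'| ≤ α₂ :=
    abs_le.2 ⟨by linarith [hαpos n n' p p', (hbd n n' p p').2], (hbd n n' p p').2⟩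
  have hQf n : Q f n = collisionOp volume α M f n := funext (hQ f n)
  simp only [hQf]
  exact ⟨exists_ae_eq_const_mul_of_collisionOp_ae_eq_zero hαmeas hαpos hαC hsym hMpos hMint
      (.of_sq_div (fun n => (hfmeas n).aestronglyMeasurable) hMpos hMint hg) hg,
    fun ⟨_, hN⟩ => collisionOp_ae_eq_zero_of_ae_eq_const_mul hN⟩

theorem stmt7
    (m ε : ℕ → ℝ)
    (hm : ∀ n, 0 < m n)
    (hε : Summable fun n => Real.exp (-ε n))
    (Z : ℝ) (hZ : Z = ∑' n, Real.exp (-ε n))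
    (M : ℕ → ℝ → ℝ)
    (hM : ∀ n p, M n p =
      Real.exp (-(p ^ 2 / (2 * m n) + ε n)) / (Real.sqrt (2 * Real.pi * m n) * Z))
    (hMnorm : (∑' n, ∫ p, M n p) = 1)
    (α : ℕ → ℕ → ℝ → ℝ → ℝ)
    (hαmeas : ∀ n n', Measurable fun q : ℝ × ℝ => α n n' q.1 q.2)
    (α₁ α₂ : ℝ) (hα₁ : 0 < α₁) (hα₁₂ : α₁ ≤ α₂)
    (hsym : ∀ n n' p p', α n n' p p' = α n' n p' p)
    (hbd : ∀ n n' p p', α₁ ≤ α n n' p p' ∧ α n n' p p' ≤ α₂)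
    (Q : (ℕ → ℝ → ℝ) → ℕ → ℝ → ℝ)
    (hQ : ∀ f n p, Q f n p =
      ∑' n', ∫ p', α n n' p p' * (M n p * f n' p' - M n' p' * f n p))
    (memL2M : (ℕ → ℝ → ℝ) → Prop)
    (hmem : ∀ f, memL2M f ↔ (∀ n, Measurable (f n)) ∧
      (∀ n, Integrable fun p => f n p ^ 2 / M n p) ∧
      (Summable fun n => ∫ p, f n p ^ 2 / M n p))
    (nrm : (ℕ → ℝ → ℝ) → ℝ)
    (hnrm : ∀ f, nrm f = (∑' n, ∫ p, f n p ^ 2 / M n p) ^ ((1 : ℝ) / 2)) :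
    ∀ f, memL2M f →
      ((∀ n, ∀ᵐ p ∂(volume : Measure ℝ), Q f n p = 0) ↔
        ∃ N : ℝ, ∀ n, ∀ᵐ p ∂(volume : Measure ℝ), f n p = N * M n p) :=
  stmt7_general m ε hm hε Z hZ M hM hMnorm α hαmeas α₁ α₂ hα₁ hsym hbd Q hQ memL2M hmem
end

section
/- (Nonnegativity of the diffusion coefficient, Definition 2.3.) Assume in addition that the series ∑' n, Real.exp (−ε n) / m n converges, and let Θ ∈ L²_M satisfy Q Θ n p = −(p / m n) * M n p for every n and almost every p. Then the diffusion coefficient D = ∑' n, ∫ p, (p / m n) * Θ n p is finite and nonnegative: D ≥ 0. -/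
/-!
Since `Q Θ = -(p / m) M`, the diffusion coefficient is `D = -⟨Q Θ, Θ⟩_M`. Write this pairing as a
double integral in `(n, p)` and `(n', p')` and average it with its image under exchanging the two
variables: by the symmetry of `α` the integrand becomes `-½ α M M' (Θ'/M' - Θ/M)²`, so `D ≥ 0`.
Sums over bands are integrals for the counting measure on `ℕ`, so everything happens on `ℕ × ℝ`
with counting ⊗ Lebesgue measure, where Fubini applies. The double integral converges absolutely
because `α ≤ α₂` and `|x y| ≤ (x² w + y² / w) / 2`; this is also what makes `D` finite.
-/

open MeasureTheory Real Function ProbabilityTheory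

lemma exp_div_sqrt_mul_eq_gaussianPDFReal {c e Z : ℝ} (hc : 0 < c) (p : ℝ) :
    exp (-(p ^ 2 / (2 * c) + e)) / (√(2 * π * c) * Z) =
      exp (-e) / Z * gaussianPDFReal 0 c.toNNReal p := by
  rw [gaussianPDFReal, Real.coe_toNNReal _ hc.le, sub_zero, neg_add, exp_add, neg_div]
  field_simp

lemma abs_mul_le_sq_mul_add_sq_div {w : ℝ} (hw : 0 < w) (x y : ℝ) :
    |x * y| ≤ (x ^ 2 * w + y ^ 2 / w) / 2 := by
  have hsq : 0 ≤ (|x| * w - |y|) ^ 2 / w := by positivity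
  have h : (|x| * w - |y|) ^ 2 / w = x ^ 2 * w + y ^ 2 / w - 2 * |x * y| := by
    rw [abs_mul, ← sq_abs x, ← sq_abs y]
    field_simp
    ring
  linarith

lemma abs_collision_integrand_le {a C w w' t t' : ℝ} (ha : 0 ≤ a) (haC : a ≤ C)
    (hw : 0 < w) (hw' : 0 < w') :
    |a * (w * t' - w' * t)| ≤ C * (w * |t'| + w' * |t|) := by
  rw [abs_mul, abs_of_nonneg ha]
  refine mul_le_mul haC ?_ (abs_nonneg _) (ha.trans haC)
  calc |w * t' - w' * t| ≤ |w * t'| + |w' * t| := abs_sub _ _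
    _ = w * |t'| + w' * |t| := by rw [abs_mul, abs_mul, abs_of_pos hw, abs_of_pos hw']

lemma collision_pairing_add_swap_nonpos {a w w' t t' : ℝ} (ha : 0 ≤ a) (hw : 0 < w)
    (hw' : 0 < w') :
    a * (w * t' - w' * t) * (t / w) + a * (w' * t - w * t') * (t' / w') ≤ 0 := by
  have h : a * (w * t' - w' * t) * (t / w) + a * (w' * t - w * t') * (t' / w') =
      -(a * (w * t' - w' * t) ^ 2 / (w * w')) := by
    field_simp
    ring
  rw [h, neg_nonpos]
  positivity

namespace MeasureTheory

section CountProd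

variable {X E : Type*} [MeasurableSpace X] {ν : Measure X} [SFinite ν]
  [NormedAddCommGroup E] {f : ℕ → X → E}

lemma Integrable.of_uncurry_count_prod (hf : Integrable (uncurry f) (Measure.count.prod ν))
    (n : ℕ) : Integrable (f n) ν :=
  Measure.ae_count_iff.1 hf.prod_right_ae n

lemma Integrable.hasSum_integral_count_prod [NormedSpace ℝ E] [CompleteSpace E]
    (hf : Integrable (uncurry f) (Measure.count.prod ν)) :
    HasSum (fun n => ∫ x, f n x ∂ν) (∫ z, uncurry f z ∂(Measure.count.prod ν)) := by
  have hsum : Summable fun n => ∫ x, f n x ∂ν :=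
    (integrable_count_iff.1 hf.integral_prod_left).of_norm
  rw [integral_prod _ hf, integral_countable hf.integral_prod_left]
  simpa using hsum.hasSum

lemma integrable_uncurry_count_prod_of_nonneg {f : ℕ → X → ℝ} (hf : ∀ n, Measurable (f n))
    (hf0 : ∀ n x, 0 ≤ f n x) (hint : ∀ n, Integrable (f n) ν)
    (hsum : Summable fun n => ∫ x, f n x ∂ν) :
    Integrable (uncurry f) (Measure.count.prod ν) := by
  rw [integrable_prod_iff (measurable_from_prod_countable_right hf).aestronglyMeasurable,
    Measure.ae_count_iff, integrable_count_iff]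
  refine ⟨hint, hsum.congr fun n => ?_⟩
  simp only [uncurry_apply_pair, Real.norm_of_nonneg (hf0 _ _),
    Real.norm_of_nonneg (integral_nonneg (hf0 n))]

lemma measurable_count_prod_kernel {Y : Type*} [MeasurableSpace Y] {g : ℕ → ℕ → X → Y → ℝ}
    (hg : ∀ n n', Measurable fun q : X × Y => g n n' q.1 q.2) :
    Measurable fun z : (ℕ × X) × (ℕ × Y) => g z.1.1 z.2.1 z.1.2 z.2.2 := by
  have h : Measurable fun q : (ℕ × ℕ) × (X × Y) => g q.1.1 q.1.2 q.2.1 q.2.2 :=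
    measurable_from_prod_countable_right fun i => hg i.1 i.2
  exact h.comp (f := fun z : (ℕ × X) × (ℕ × Y) => ((z.1.1, z.2.1), (z.1.2, z.2.2))) (by fun_prop)

end CountProd

section Collision

variable {X : Type*} [MeasurableSpace X] {μ : Measure X} {a : X → X → ℝ} {W f : X → ℝ} {C : ℝ}

noncomputable def collisionOp (μ : Measure X) (a : X → X → ℝ) (W f : X → ℝ) (x : X) : ℝ :=
  ∫ y, a x y * (W x * f y - W y * f x) ∂μ

lemma Integrable.of_sq_div (hW0 : ∀ x, 0 < W x) (hW : Integrable W μ)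
    (hf : AEStronglyMeasurable f μ) (hfW : Integrable (fun x => f x ^ 2 / W x) μ) :
    Integrable f μ :=
  ((hW.add hfW).div_const 2).mono' hf <| ae_of_all _ fun x => by
    simpa using abs_mul_le_sq_mul_add_sq_div (hW0 x) 1 (f x)

lemma integral_nonpos_of_add_swap_nonpos [SFinite μ] {G : X × X → ℝ}
    (hG : Integrable G (μ.prod μ)) (h : ∀ z, G z + G z.swap ≤ 0) :
    ∫ z, G z ∂μ.prod μ ≤ 0 := by
  have hsum : ∫ z, (G z + G z.swap) ∂μ.prod μ ≤ 0 := integral_nonpos h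
  rw [integral_add hG (f := G) (g := fun z => G z.swap) hG.swap, integral_prod_swap] at hsum
  linarith

lemma integrable_collisionOp_integrand (ha : Measurable (uncurry a)) (ha0 : ∀ x y, 0 ≤ a x y)
    (haC : ∀ x y, a x y ≤ C) (hW0 : ∀ x, 0 < W x) (hWm : Measurable W) (hW : Integrable W μ)
    (hfm : Measurable f) (hf : Integrable f μ) (x : X) :
    Integrable (fun y => a x y * (W x * f y - W y * f x)) μ :=
  (((hf.abs.const_mul (W x)).add (hW.mul_const |f x|)).const_mul C).mono'
    ((ha.comp measurable_prodMk_left).mul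
      ((hfm.const_mul _).sub (hWm.mul_const _))).aestronglyMeasurable
    (ae_of_all _ fun y => abs_collision_integrand_le (ha0 x y) (haC x y) (hW0 x) (hW0 y))

lemma integrable_collisionOp_pairing [SFinite μ] (ha : Measurable (uncurry a))
    (ha0 : ∀ x y, 0 ≤ a x y) (haC : ∀ x y, a x y ≤ C) (hW0 : ∀ x, 0 < W x)
    (hWm : Measurable W) (hW : Integrable W μ) (hfm : Measurable f)
    (hfW : Integrable (fun x => f x ^ 2 / W x) μ) :
    Integrable (fun z : X × X => a z.1 z.2 * (W z.1 * f z.2 - W z.2 * f z.1) * (f z.1 / W z.1))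
      (μ.prod μ) := by
  have hf := Integrable.of_sq_div hW0 hW hfm.aestronglyMeasurable hfW
  refine (((hf.abs.mul_prod hf.abs).add (hfW.mul_prod hW)).const_mul C).mono'
    (by fun_prop) (ae_of_all _ fun z => ?_)
  obtain ⟨x, y⟩ := z
  have hxy := abs_collision_integrand_le (t := f x) (t' := f y) (ha0 x y) (haC x y) (hW0 x) (hW0 y)
  have hWx := hW0 x
  calc ‖a x y * (W x * f y - W y * f x) * (f x / W x)‖
      = |a x y * (W x * f y - W y * f x)| * (|f x| / W x) := by
        rw [Real.norm_eq_abs, abs_mul, abs_div, abs_of_pos hWx]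
    _ ≤ C * (W x * |f y| + W y * |f x|) * (|f x| / W x) := by gcongr
    _ = C * (|f x| * |f y| + f x ^ 2 / W x * W y) := by
        rw [← sq_abs (f x)]
        field_simp

lemma integrable_collisionOp_mul_div [SFinite μ] (ha : Measurable (uncurry a))
    (ha0 : ∀ x y, 0 ≤ a x y) (haC : ∀ x y, a x y ≤ C) (hW0 : ∀ x, 0 < W x)
    (hWm : Measurable W) (hW : Integrable W μ) (hfm : Measurable f)
    (hfW : Integrable (fun x => f x ^ 2 / W x) μ) :
    Integrable (fun x => collisionOp μ a W f x * (f x / W x)) μ := by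
  simpa only [collisionOp, ← integral_mul_const] using
    (integrable_collisionOp_pairing ha ha0 haC hW0 hWm hW hfm hfW).integral_prod_left

lemma integral_collisionOp_mul_div_nonpos [SFinite μ] (ha : Measurable (uncurry a))
    (ha0 : ∀ x y, 0 ≤ a x y) (haC : ∀ x y, a x y ≤ C) (ha_symm : ∀ x y, a x y = a y x)
    (hW0 : ∀ x, 0 < W x) (hWm : Measurable W) (hW : Integrable W μ) (hfm : Measurable f)
    (hfW : Integrable (fun x => f x ^ 2 / W x) μ) :
    ∫ x, collisionOp μ a W f x * (f x / W x) ∂μ ≤ 0 := by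
  have hG := integrable_collisionOp_pairing ha ha0 haC hW0 hWm hW hfm hfW
  simp only [collisionOp, ← integral_mul_const]
  rw [integral_integral (f := fun x y => a x y * (W x * f y - W y * f x) * (f x / W x)) hG]
  refine integral_nonpos_of_add_swap_nonpos hG fun ⟨x, y⟩ => ?_
  rw [Prod.swap_prod_mk, ha_symm y x]
  exact collision_pairing_add_swap_nonpos (ha0 x y) (hW0 x) (hW0 y)

end Collision

section Band

variable {X : Type*} [MeasurableSpace X] {ν : Measure X} [SFinite ν]
  {α : ℕ → ℕ → X → X → ℝ} {W f : ℕ → X → ℝ} {C : ℝ}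

noncomputable def bandCollisionOp (ν : Measure X) (α : ℕ → ℕ → X → X → ℝ) (W f : ℕ → X → ℝ)
    (n : ℕ) (x : X) : ℝ :=
  ∑' n', ∫ y, α n n' x y * (W n x * f n' y - W n' y * f n x) ∂ν

theorem bandCollisionOp_dissipation (hα : ∀ n n', Measurable fun q : X × X => α n n' q.1 q.2)
    (hα0 : ∀ n n' x y, 0 ≤ α n n' x y) (hαC : ∀ n n' x y, α n n' x y ≤ C)
    (hα_symm : ∀ n n' x y, α n n' x y = α n' n y x) (hW0 : ∀ n x, 0 < W n x)
    (hWm : ∀ n, Measurable (W n)) (hWint : ∀ n, Integrable (W n) ν)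
    (hWsum : Summable fun n => ∫ x, W n x ∂ν) (hfm : ∀ n, Measurable (f n))
    (hfWint : ∀ n, Integrable (fun x => f n x ^ 2 / W n x) ν)
    (hfWsum : Summable fun n => ∫ x, f n x ^ 2 / W n x ∂ν) :
    (∀ n, Integrable (fun x => bandCollisionOp ν α W f n x * (f n x / W n x)) ν) ∧
      ∃ s ≤ 0, HasSum (fun n => ∫ x, bandCollisionOp ν α W f n x * (f n x / W n x) ∂ν) s := by
  set μ : Measure (ℕ × X) := Measure.count.prod ν
  let a : ℕ × X → ℕ × X → ℝ := fun z z' => α z.1 z'.1 z.2 z'.2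
  have ha : Measurable (uncurry a) := measurable_count_prod_kernel hα
  have ha0 (z z' : ℕ × X) : 0 ≤ a z z' := hα0 ..
  have haC (z z' : ℕ × X) : a z z' ≤ C := hαC ..
  have hWΩ0 (z : ℕ × X) : 0 < uncurry W z := hW0 ..
  have hWΩm : Measurable (uncurry W) := measurable_from_prod_countable_right hWm
  have hfΩm : Measurable (uncurry f) := measurable_from_prod_countable_right hfm
  have hWΩ : Integrable (uncurry W) μ :=
    integrable_uncurry_count_prod_of_nonneg hWm (fun n x => (hW0 n x).le) hWint hWsum
  have hfWΩ : Integrable (fun z => uncurry f z ^ 2 / uncurry W z) μ :=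
    integrable_uncurry_count_prod_of_nonneg (f := fun n x => f n x ^ 2 / W n x)
      (fun n => ((hfm n).pow_const 2).div (hWm n))
      (fun n x => div_nonneg (sq_nonneg _) (hW0 n x).le) hfWint hfWsum
  have hfΩ : Integrable (uncurry f) μ := .of_sq_div hWΩ0 hWΩ hfΩm.aestronglyMeasurable hfWΩ
  have hQ (n : ℕ) (x : X) :
      bandCollisionOp ν α W f n x = collisionOp μ a (uncurry W) (uncurry f) (n, x) :=
    (integrable_collisionOp_integrand ha ha0 haC hWΩ0 hWΩm hWΩ hfΩm hfΩ
      (n, x)).hasSum_integral_count_prod.tsum_eq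
  have hpair : Integrable (uncurry fun n x =>
      collisionOp μ a (uncurry W) (uncurry f) (n, x) * (f n x / W n x)) μ :=
    integrable_collisionOp_mul_div ha ha0 haC hWΩ0 hWΩm hWΩ hfΩm hfWΩ
  simp only [hQ]
  exact ⟨hpair.of_uncurry_count_prod, _,
    integral_collisionOp_mul_div_nonpos ha ha0 haC (fun _ _ => hα_symm ..) hWΩ0 hWΩm hWΩ hfΩm hfWΩ,
    hpair.hasSum_integral_count_prod⟩

end Band

end MeasureTheory

theorem stmt10_general
    (m ε : ℕ → ℝ)
    (hm : ∀ n, 0 < m n)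
    (hε : Summable fun n => Real.exp (-ε n))
    (Z : ℝ) (hZ : Z = ∑' n, Real.exp (-ε n))
    (M : ℕ → ℝ → ℝ)
    (hM : ∀ n p, M n p =
      Real.exp (-(p ^ 2 / (2 * m n) + ε n)) / (Real.sqrt (2 * Real.pi * m n) * Z))
    (α : ℕ → ℕ → ℝ → ℝ → ℝ)
    (hαmeas : ∀ n n', Measurable fun q : ℝ × ℝ => α n n' q.1 q.2)
    (α₁ α₂ : ℝ) (hα₁ : 0 < α₁)
    (hsym : ∀ n n' p p', α n n' p p' = α n' n p' p)
    (hbd : ∀ n n' p p', α₁ ≤ α n n' p p' ∧ α n n' p p' ≤ α₂)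
    (Q : (ℕ → ℝ → ℝ) → ℕ → ℝ → ℝ)
    (hQ : ∀ f n p, Q f n p =
      ∑' n', ∫ p', α n n' p p' * (M n p * f n' p' - M n' p' * f n p))
    (memL2M : (ℕ → ℝ → ℝ) → Prop)
    (hmem : ∀ f, memL2M f ↔ (∀ n, Measurable (f n)) ∧
      (∀ n, Integrable fun p => f n p ^ 2 / M n p) ∧
      (Summable fun n => ∫ p, f n p ^ 2 / M n p))
    (Θ : ℕ → ℝ → ℝ) (hΘmem : memL2M Θ)
    (hΘeq : ∀ n, ∀ᵐ p ∂(volume : Measure ℝ), Q Θ n p = -(p / m n) * M n p) :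
    (∀ n, Integrable fun p => (p / m n) * Θ n p) ∧
      (Summable fun n => ∫ p, (p / m n) * Θ n p) ∧
      0 ≤ (∑' n, ∫ p, (p / m n) * Θ n p) := by
  obtain ⟨hΘm, hΘint, hΘsum⟩ := (hmem Θ).1 hΘmem
  have hZ0 : 0 < Z := hZ ▸ hε.tsum_pos (fun n => (exp_pos _).le) 0 (exp_pos _)
  have hM_gauss (n : ℕ) : M n = fun p => exp (-ε n) / Z * gaussianPDFReal 0 (m n).toNNReal p :=
    funext fun p => (hM n p).trans (exp_div_sqrt_mul_eq_gaussianPDFReal (hm n) p)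
  have hm_nnreal (n : ℕ) : (m n).toNNReal ≠ 0 := (Real.toNNReal_pos.2 (hm n)).ne'
  have hM0 (n : ℕ) (p : ℝ) : 0 < M n p := by
    rw [hM_gauss]; exact mul_pos (by positivity) (gaussianPDFReal_pos _ _ _ (hm_nnreal n))
  have hMmass (n : ℕ) : ∫ p, M n p = exp (-ε n) / Z := by
    rw [hM_gauss, integral_const_mul, integral_gaussianPDFReal_eq_one _ (hm_nnreal n), mul_one]
  obtain ⟨hint, s, hs, hsum⟩ := bandCollisionOp_dissipation hαmeas
    (fun _ _ _ _ => hα₁.le.trans (hbd ..).1) (fun _ _ _ _ => (hbd ..).2) hsym hM0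
    (fun n => by rw [hM_gauss]; fun_prop)
    (fun n => by rw [hM_gauss]; exact (integrable_gaussianPDFReal _ _).const_mul _)
    (by simpa only [hMmass] using hε.div_const Z) hΘm hΘint hΘsum
  have hQΘ : Q Θ = bandCollisionOp volume α M Θ := funext₂ fun n p => hQ Θ n p
  have hD (n : ℕ) : (fun p => p / m n * Θ n p) =ᵐ[volume]
      fun p => -(bandCollisionOp volume α M Θ n p * (Θ n p / M n p)) := by
    filter_upwards [hΘeq n] with p hp
    rw [← hQΘ, hp]
    field_simp [(hM0 n p).ne']
  have hDsum : HasSum (fun n => ∫ p, p / m n * Θ n p) (-s) := by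
    simpa only [integral_congr_ae (hD _), integral_neg] using hsum.neg
  exact ⟨fun n => (hint n).neg.congr (hD n).symm, hDsum.summable,
    hDsum.tsum_eq ▸ neg_nonneg.2 hs⟩

theorem stmt10
    (m ε : ℕ → ℝ)
    (hm : ∀ n, 0 < m n)
    (hε : Summable fun n => Real.exp (-ε n))
    (Z : ℝ) (hZ : Z = ∑' n, Real.exp (-ε n))
    (M : ℕ → ℝ → ℝ)
    (hM : ∀ n p, M n p =
      Real.exp (-(p ^ 2 / (2 * m n) + ε n)) / (Real.sqrt (2 * Real.pi * m n) * Z))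
    (hMnorm : (∑' n, ∫ p, M n p) = 1)
    (α : ℕ → ℕ → ℝ → ℝ → ℝ)
    (hαmeas : ∀ n n', Measurable fun q : ℝ × ℝ => α n n' q.1 q.2)
    (α₁ α₂ : ℝ) (hα₁ : 0 < α₁) (hα₁₂ : α₁ ≤ α₂)
    (hsym : ∀ n n' p p', α n n' p p' = α n' n p' p)
    (hbd : ∀ n n' p p', α₁ ≤ α n n' p p' ∧ α n n' p p' ≤ α₂)
    (Q : (ℕ → ℝ → ℝ) → ℕ → ℝ → ℝ)
    (hQ : ∀ f n p, Q f n p =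
      ∑' n', ∫ p', α n n' p p' * (M n p * f n' p' - M n' p' * f n p))
    (memL2M : (ℕ → ℝ → ℝ) → Prop)
    (hmem : ∀ f, memL2M f ↔ (∀ n, Measurable (f n)) ∧
      (∀ n, Integrable fun p => f n p ^ 2 / M n p) ∧
      (Summable fun n => ∫ p, f n p ^ 2 / M n p))
    (nrm : (ℕ → ℝ → ℝ) → ℝ)
    (hnrm : ∀ f, nrm f = (∑' n, ∫ p, f n p ^ 2 / M n p) ^ ((1 : ℝ) / 2))
    (hεm : Summable fun n => Real.exp (-ε n) / m n)
    (Θ : ℕ → ℝ → ℝ) (hΘmem : memL2M Θ)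
    (hΘeq : ∀ n, ∀ᵐ p ∂(volume : Measure ℝ), Q Θ n p = -(p / m n) * M n p) :
    (∀ n, Integrable fun p => (p / m n) * Θ n p) ∧
      (Summable fun n => ∫ p, (p / m n) * Θ n p) ∧
      0 ≤ (∑' n, ∫ p, (p / m n) * Θ n p) :=
  stmt10_general m ε hm hε Z hZ M hM α hαmeas α₁ α₂ hα₁ hsym hbd Q hQ memL2M hmem Θ hΘmem hΘeq
end

section
/- (Remark after Definition 2.3, constant cross-section: explicit Θ.) Assume in addition that the series ∑' n, Real.exp (−ε n) / m n converges and that α n n' p p' = 1 / τ for all n, n', p, p', where τ > 0 is a constant (relaxation time). Then the family Θ defined by Θ n p = τ * (p / m n) * M n p belongs to L²_M and satisfies, for every n and every p ∈ ℝ, Q Θ n p = −(p / m n) * M n p, together with ∑' n, ∫ p, Θ n p = 0. -/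
open MeasureTheory Real

lemma gauss1aux (b : ℝ) : ∫ x : ℝ, x * Real.exp (-b * x ^ 2) = 0 := by
  have h := integral_neg_eq_self (fun x : ℝ => x * Real.exp (-b * x ^ 2)) volume
  have h2 : ∫ x : ℝ, (-x) * Real.exp (-b * (-x) ^ 2)
      = -∫ x : ℝ, x * Real.exp (-b * x ^ 2) := by
    rw [← integral_neg]
    congr 1; funext x; ring_nf
  rw [h2] at h
  linarith

lemma gauss2aux {b : ℝ} (hb : 0 < b) :
    ∫ x : ℝ, x ^ 2 * Real.exp (-b * x ^ 2) = Real.sqrt (Real.pi / b) / (2 * b) := by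
  have hint : Integrable fun x : ℝ => x ^ 2 * Real.exp (-b * x ^ 2) := by
    have := integrable_rpow_mul_exp_neg_mul_sq hb (by norm_num : (-1:ℝ) < 2)
    simpa [Real.rpow_natCast] using this
  have hIoi : ∫ x in Set.Ioi (0:ℝ), x ^ 2 * Real.exp (-b * x ^ 2)
      = b ^ (-(3:ℝ)/2) * (1/2) * Real.Gamma (3/2) := by
    have := integral_rpow_mul_exp_neg_mul_rpow (p := 2) (q := 2) (by norm_num) (by norm_num) hb
    have h2 : ∀ x : ℝ, x ^ (2:ℝ) = x ^ 2 := fun x => by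
      rw [show (2:ℝ) = ((2:ℕ):ℝ) by norm_num, Real.rpow_natCast]
    simp only [h2] at this
    rw [this]; norm_num
  have hIic : ∫ x in Set.Iic (0:ℝ), x ^ 2 * Real.exp (-b * x ^ 2)
      = ∫ x in Set.Ioi (0:ℝ), x ^ 2 * Real.exp (-b * x ^ 2) := by
    have := integral_comp_neg_Ioi (0:ℝ) (fun x => x ^ 2 * Real.exp (-b * x ^ 2))
    simp only [neg_sq, neg_zero] at this
    exact this.symm
  have hsplit := intervalIntegral.integral_Iic_add_Ioi (b := (0:ℝ)) hint.integrableOn hint.integrableOn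
  have hG : Real.Gamma (3/2) = Real.sqrt Real.pi / 2 := by
    rw [show (3:ℝ)/2 = 1/2 + 1 by norm_num, Real.Gamma_add_one (by norm_num),
      Real.Gamma_one_half_eq]
    ring
  have hbpow : b ^ (-(3:ℝ)/2) = (b * Real.sqrt b)⁻¹ := by
    rw [show -(3:ℝ)/2 = -(1 + 1/2) by norm_num, Real.rpow_neg hb.le,
      Real.rpow_add hb, Real.rpow_one, ← Real.sqrt_eq_rpow]
  have hsb : (0:ℝ) < Real.sqrt b := Real.sqrt_pos.mpr hb
  rw [← hsplit, hIic, hIoi, hG, hbpow, Real.sqrt_div pi_pos.le]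
  field_simp
  ring_nf

theorem stmt11
    (m ε : ℕ → ℝ)
    (hm : ∀ n, 0 < m n)
    (hε : Summable fun n => Real.exp (-ε n))
    (Z : ℝ) (hZ : Z = ∑' n, Real.exp (-ε n))
    (M : ℕ → ℝ → ℝ)
    (hM : ∀ n p, M n p =
      Real.exp (-(p ^ 2 / (2 * m n) + ε n)) / (Real.sqrt (2 * Real.pi * m n) * Z))
    (hMnorm : (∑' n, ∫ p, M n p) = 1)
    (α : ℕ → ℕ → ℝ → ℝ → ℝ)
    (hαmeas : ∀ n n', Measurable fun q : ℝ × ℝ => α n n' q.1 q.2)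
    (α₁ α₂ : ℝ) (hα₁ : 0 < α₁) (hα₁₂ : α₁ ≤ α₂)
    (hsym : ∀ n n' p p', α n n' p p' = α n' n p' p)
    (hbd : ∀ n n' p p', α₁ ≤ α n n' p p' ∧ α n n' p p' ≤ α₂)
    (Q : (ℕ → ℝ → ℝ) → ℕ → ℝ → ℝ)
    (hQ : ∀ f n p, Q f n p =
      ∑' n', ∫ p', α n n' p p' * (M n p * f n' p' - M n' p' * f n p))
    (memL2M : (ℕ → ℝ → ℝ) → Prop)
    (hmem : ∀ f, memL2M f ↔ (∀ n, Measurable (f n)) ∧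
      (∀ n, Integrable fun p => f n p ^ 2 / M n p) ∧
      (Summable fun n => ∫ p, f n p ^ 2 / M n p))
    (nrm : (ℕ → ℝ → ℝ) → ℝ)
    (hnrm : ∀ f, nrm f = (∑' n, ∫ p, f n p ^ 2 / M n p) ^ ((1 : ℝ) / 2))
    (hεm : Summable fun n => Real.exp (-ε n) / m n)
    (τ : ℝ) (hτ : 0 < τ)
    (hαconst : ∀ n n' p p', α n n' p p' = 1 / τ)
    (Θ : ℕ → ℝ → ℝ) (hΘ : ∀ n p, Θ n p = τ * (p / m n) * M n p) :
    memL2M Θ ∧ (∀ n p, Q Θ n p = -(p / m n) * M n p) ∧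
      (∑' n, ∫ p, Θ n p) = 0 := by
  have hZpos : 0 < Z := by
    rw [hZ]
    exact Summable.tsum_pos hε (fun n => (Real.exp_pos _).le) 0 (Real.exp_pos _)
  set c : ℕ → ℝ := fun n => Real.exp (-ε n) / (Real.sqrt (2 * Real.pi * m n) * Z) with hc
  set b : ℕ → ℝ := fun n => (2 * m n)⁻¹ with hb
  have hbpos : ∀ n, 0 < b n := fun n => by
    have := hm n; simp only [hb]; positivity
  have hsq : ∀ n, 0 < Real.sqrt (2 * Real.pi * m n) := fun n =>
    Real.sqrt_pos.mpr (by have := hm n; have := Real.pi_pos; positivity)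
  have hMeq : ∀ n, M n = fun p => c n * Real.exp (-b n * p ^ 2) := by
    intro n; funext p
    rw [hM, show -(p ^ 2 / (2 * m n) + ε n) = -b n * p ^ 2 + -ε n by
      have := (hm n).ne'
      simp only [hb]; field_simp; ring, Real.exp_add]
    ring
  have hMpos : ∀ n p, 0 < M n p := fun n p => by
    rw [hMeq]
    have : 0 < c n := by
      simp only [hc]; have := hsq n; positivity
    positivity
  have hMcont : ∀ n, Continuous (M n) := fun n => by
    rw [hMeq]; fun_prop
  -- basic integrals
  have hintM : ∀ n, Integrable (M n) := fun n => by
    rw [hMeq]; exact (integrable_exp_neg_mul_sq (hbpos n)).const_mul _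
  have hintM1 : ∀ n, Integrable (fun p => p * M n p) := fun n => by
    have h : (fun p => p * M n p) = fun p => c n * (p * Real.exp (-b n * p ^ 2)) := by
      funext p; rw [hMeq]; ring
    rw [h]
    exact (integrable_mul_exp_neg_mul_sq (hbpos n)).const_mul _
  have hintM2 : ∀ n, Integrable (fun p => p ^ 2 * M n p) := fun n => by
    have h : (fun p => p ^ 2 * M n p) = fun p => c n * (p ^ 2 * Real.exp (-b n * p ^ 2)) := by
      funext p; rw [hMeq]; ring
    rw [h]
    have : Integrable fun x : ℝ => x ^ 2 * Real.exp (-b n * x ^ 2) := by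
      have := integrable_rpow_mul_exp_neg_mul_sq (hbpos n) (by norm_num : (-1:ℝ) < 2)
      simpa [Real.rpow_natCast] using this
    exact this.const_mul _
  have hsqval : ∀ n, Real.sqrt (Real.pi / b n) = Real.sqrt (2 * Real.pi * m n) := fun n => by
    congr 1
    simp only [hb]
    field_simp
  have hIM : ∀ n, ∫ p, M n p = Real.exp (-ε n) / Z := fun n => by
    rw [hMeq]
    rw [MeasureTheory.integral_const_mul, integral_gaussian, hsqval]
    simp only [hc]
    rw [div_mul_eq_mul_div, mul_comm (Real.exp (-ε n)),
      mul_div_mul_left _ _ (hsq n).ne']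
  have hI1 : ∀ n, ∫ p, p * M n p = 0 := fun n => by
    have h : (fun p => p * M n p) = fun p => c n * (p * Real.exp (-b n * p ^ 2)) := by
      funext p; rw [hMeq]; ring
    rw [h, MeasureTheory.integral_const_mul, gauss1aux, mul_zero]
  have hI2 : ∀ n, ∫ p, p ^ 2 * M n p = m n * Real.exp (-ε n) / Z := fun n => by
    have h : (fun p => p ^ 2 * M n p) = fun p => c n * (p ^ 2 * Real.exp (-b n * p ^ 2)) := by
      funext p; rw [hMeq]; ring
    rw [h, MeasureTheory.integral_const_mul, gauss2aux (hbpos n), hsqval]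
    simp only [hc, hb]
    rw [show (2 * (2 * m n)⁻¹) = (m n)⁻¹ by field_simp [(hm n).ne']]
    have h2 : Real.sqrt 2 ≠ 0 := by positivity
    have h3 : Real.sqrt Real.pi ≠ 0 := by
      have := Real.pi_pos; positivity
    have h4 : Real.sqrt (m n) ≠ 0 := by have := hm n; positivity
    field_simp [h2, h3, h4, hZpos.ne']
  have hIΘ : ∀ n, ∫ p, Θ n p = 0 := fun n => by
    have : (fun p => Θ n p) = fun p => (τ / m n) * (p * M n p) := by
      funext p; rw [hΘ]; ring
    rw [this, MeasureTheory.integral_const_mul, hI1, mul_zero]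
  refine ⟨?_, ?_, ?_⟩
  · rw [hmem]
    refine ⟨fun n => ?_, fun n => ?_, ?_⟩
    · have : Continuous (Θ n) := by
        have : (Θ n) = fun p => τ * (p / m n) * M n p := funext fun p => hΘ n p
        rw [this]
        exact (continuous_const.mul (continuous_id.div_const _)).mul (hMcont n)
      exact this.measurable
    · have heq : (fun p => Θ n p ^ 2 / M n p)
          = fun p => (τ ^ 2 / m n ^ 2) * (p ^ 2 * M n p) := by
        funext p
        rw [div_eq_iff (hMpos n p).ne', hΘ]
        ring
      rw [heq]
      exact (hintM2 n).const_mul _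
    · have heq : ∀ n, ∫ p, Θ n p ^ 2 / M n p = (τ ^ 2 / Z) * (Real.exp (-ε n) / m n) := by
        intro n
        have heq2 : (fun p => Θ n p ^ 2 / M n p)
            = fun p => (τ ^ 2 / m n ^ 2) * (p ^ 2 * M n p) := by
          funext p
          rw [div_eq_iff (hMpos n p).ne', hΘ]
          ring
        rw [heq2, MeasureTheory.integral_const_mul, hI2]
        field_simp [(hm n).ne', hZpos.ne']
      simp only [heq]
      exact (hεm.mul_left _)
  · intro n p
    rw [hQ]
    have key : ∀ n', ∫ p', α n n' p p' * (M n p * Θ n' p' - M n' p' * Θ n p)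
        = (-(1 / τ) * Θ n p / Z) * Real.exp (-ε n') := by
      intro n'
      have heq : (fun p' => α n n' p p' * (M n p * Θ n' p' - M n' p' * Θ n p))
          = fun p' => ((1 / τ) * M n p * (τ / m n')) * (p' * M n' p')
            + (-(1 / τ) * Θ n p) * M n' p' := by
        funext p'
        rw [hαconst, hΘ n' p']
        ring
      rw [heq, MeasureTheory.integral_add ((hintM1 n').const_mul _) ((hintM n').const_mul _),
        MeasureTheory.integral_const_mul, MeasureTheory.integral_const_mul, hI1, hIM]
      ring
    rw [tsum_congr key, tsum_mul_left, ← hZ, hΘ]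
    field_simp [hτ.ne', hZpos.ne', (hm n).ne']
  · rw [tsum_congr hIΘ, tsum_zero]
end

section
/- (Appendix Lemma A.2, growth bound on Θ.) Assume in addition that the series ∑' n, Real.exp (−ε n) / m n converges, and let Θ ∈ L²_M satisfy Q Θ n p = −(p / m n) * M n p for every n and almost every p. Then for every n there exists a constant C ≥ 0 (one may take C = max (α₂ * ‖Θ‖_M, 1 / m n) / α₁) such that |Θ n p| ≤ C * (1 + |p|) * M n p for almost every p ∈ ℝ. -/
open MeasureTheory Real

/-!
The collision operator splits as `Q Θ n p = M n p * S p - Θ n p * ν p` with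
`S p = ∑' k, ∫ p', α n k p p' * Θ k p'` and `ν p = ∑' k, ∫ p', α n k p p' * M k p'`.
As `∑' k, ∫ M k = 1`, the bounds on `α` give `α₁ ≤ ν p` and `|S p| ≤ α₂ * ∑' k, ‖Θ k‖₁`, and
`∑' k, ‖Θ k‖₁ ≤ ‖Θ‖_M` is the weighted Cauchy–Schwarz inequality, obtained by integrating
`2 |x| ≤ t x² / w + w / t` and optimising over `t > 0`. Solving `Q Θ n p = -(p / m n) * M n p`
for `Θ n p` then gives the bound.
-/

theorem two_mul_abs_le_mul_sq_div_add_div {t w : ℝ} (ht : 0 < t) (hw : 0 < w) (x : ℝ) :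
    2 * |x| ≤ t * (x ^ 2 / w) + w / t := by
  rw [show t * (x ^ 2 / w) + w / t = ((t * |x|) ^ 2 + w ^ 2) / (t * w) by
    field_simp; rw [sq_abs], le_div_iff₀ (by positivity)]
  nlinarith [sq_nonneg (t * |x| - w)]

theorem le_sqrt_of_forall_two_mul_le {x A : ℝ} (h : ∀ t > 0, 2 * x ≤ t * A + 1 / t) :
    x ≤ √A := by
  rcases le_or_gt x 0 with hx | hx
  · exact hx.trans (sqrt_nonneg A)
  have hxA : x ≤ x⁻¹ * A := by
    have := h x⁻¹ (inv_pos.2 hx)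
    rw [one_div, inv_inv] at this
    linarith
  rw [le_sqrt' hx]
  calc x ^ 2 = x * x := sq x
    _ ≤ x * (x⁻¹ * A) := mul_le_mul_of_nonneg_left hxA hx.le
    _ = A := by field_simp

theorem summable_of_tsum_ne_zero {ι E : Type*} [AddCommMonoid E] [TopologicalSpace E] {f : ι → E}
    (h : ∑' i, f i ≠ 0) : Summable f := by
  by_contra hf
  exact h (tsum_eq_zero_of_not_summable hf)

section WeightedL1

variable {ι α : Type*} [MeasurableSpace α] {μ : Measure α} {t : ℝ}

theorem integrable_of_integrable_sq_div_s13 {f w : α → ℝ} (hf : AEStronglyMeasurable f μ)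
    (hw : ∀ x, 0 < w x) (hwi : Integrable w μ) (hfw : Integrable (fun x => f x ^ 2 / w x) μ) :
    Integrable f μ :=
  ((hfw.add hwi).div_const 2).mono' hf (ae_of_all _ fun x => by
    have := two_mul_abs_le_mul_sq_div_add_div one_pos (hw x) (f x)
    rw [norm_eq_abs]
    simp only [Pi.add_apply]
    linarith)

theorem two_mul_integral_abs_le {f w : α → ℝ} (hf : AEStronglyMeasurable f μ)
    (hw : ∀ x, 0 < w x) (hwi : Integrable w μ) (hfw : Integrable (fun x => f x ^ 2 / w x) μ)
    (ht : 0 < t) :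
    2 * ∫ x, |f x| ∂μ ≤ t * ∫ x, f x ^ 2 / w x ∂μ + (∫ x, w x ∂μ) / t := by
  rw [← integral_const_mul, ← integral_const_mul, ← integral_div, ← integral_add]
  · exact integral_mono ((integrable_of_integrable_sq_div_s13 hf hw hwi hfw).abs.const_mul 2)
      ((hfw.const_mul t).add (hwi.div_const t))
      fun x => two_mul_abs_le_mul_sq_div_add_div ht (hw x) (f x)
  · exact hfw.const_mul t
  · exact hwi.div_const t

theorem summable_integral_abs_and_tsum_le_sqrt {f w : ι → α → ℝ}
    (hf : ∀ k, AEStronglyMeasurable (f k) μ) (hw : ∀ k x, 0 < w k x)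
    (hwi : ∀ k, Integrable (w k) μ) (hws : ∑' k, ∫ x, w k x ∂μ = 1)
    (hfw : ∀ k, Integrable (fun x => f k x ^ 2 / w k x) μ)
    (hfws : Summable fun k => ∫ x, f k x ^ 2 / w k x ∂μ) :
    Summable (fun k => ∫ x, |f k x| ∂μ) ∧
      ∑' k, ∫ x, |f k x| ∂μ ≤ √(∑' k, ∫ x, f k x ^ 2 / w k x ∂μ) := by
  have hws' : Summable fun k => ∫ x, w k x ∂μ := summable_of_tsum_ne_zero (hws ▸ one_ne_zero)
  have hbound := fun t (ht : 0 < t) k => two_mul_integral_abs_le (hf k) (hw k) (hwi k) (hfw k) ht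
  have hsum : Summable fun k => ∫ x, |f k x| ∂μ :=
    .of_nonneg_of_le (fun k => integral_nonneg fun x => abs_nonneg _)
      (fun k => by linarith [hbound 1 one_pos k]) ((hfws.add hws').div_const 2)
  refine ⟨hsum, le_sqrt_of_forall_two_mul_le fun t ht => ?_⟩
  calc 2 * ∑' k, ∫ x, |f k x| ∂μ = ∑' k, 2 * ∫ x, |f k x| ∂μ := tsum_mul_left.symm
    _ ≤ ∑' k, (t * ∫ x, f k x ^ 2 / w k x ∂μ + (∫ x, w k x ∂μ) / t) :=
      (hsum.mul_left 2).tsum_le_tsum (hbound t ht) ((hfws.mul_left t).add (hws'.div_const t))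
    _ = t * ∑' k, ∫ x, f k x ^ 2 / w k x ∂μ + 1 / t := by
      rw [(hfws.mul_left t).tsum_add (hws'.div_const t), tsum_mul_left, tsum_div_const, hws]

end WeightedL1

section BoundedKernel

variable {ι α : Type*} [MeasurableSpace α] {μ : Measure α} {C : ℝ}

theorem abs_integral_mul_le {a f : α → ℝ} (hf : Integrable f μ) (ha : ∀ x, |a x| ≤ C) :
    |∫ x, a x * f x ∂μ| ≤ C * ∫ x, |f x| ∂μ := by
  rw [← integral_const_mul (μ := μ) C]
  refine norm_integral_le_of_norm_le (f := fun x => a x * f x) (hf.abs.const_mul C)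
    (ae_of_all _ fun x => ?_)
  rw [norm_eq_abs, abs_mul]
  exact mul_le_mul_of_nonneg_right (ha x) (abs_nonneg _)

variable {a f g : ι → α → ℝ}

theorem summable_integral_mul (hf : ∀ k, Integrable (f k) μ)
    (hfs : Summable fun k => ∫ x, |f k x| ∂μ) (ha : ∀ k x, |a k x| ≤ C) :
    Summable fun k => ∫ x, a k x * f k x ∂μ :=
  .of_norm_bounded (hfs.mul_left C) fun k => abs_integral_mul_le (hf k) (ha k)

theorem abs_tsum_integral_mul_le (hf : ∀ k, Integrable (f k) μ)
    (hfs : Summable fun k => ∫ x, |f k x| ∂μ) (ha : ∀ k x, |a k x| ≤ C) :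
    |∑' k, ∫ x, a k x * f k x ∂μ| ≤ C * ∑' k, ∫ x, |f k x| ∂μ := by
  rw [← tsum_mul_left]
  exact tsum_of_norm_bounded (f := fun k => ∫ x, a k x * f k x ∂μ) (hfs.mul_left C).hasSum
    fun k => abs_integral_mul_le (hf k) (ha k)

theorem mul_tsum_integral_le_tsum_integral_mul {c : ℝ} (ha : ∀ k, AEStronglyMeasurable (a k) μ)
    (hca : ∀ k x, c ≤ a k x) (haC : ∀ k x, |a k x| ≤ C) (hf : ∀ k, Integrable (f k) μ)
    (hf0 : ∀ k x, 0 ≤ f k x) (hfs : Summable fun k => ∫ x, f k x ∂μ) :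
    c * ∑' k, ∫ x, f k x ∂μ ≤ ∑' k, ∫ x, a k x * f k x ∂μ := by
  rw [← tsum_mul_left]
  refine (hfs.mul_left c).tsum_le_tsum (fun k => ?_) (summable_integral_mul hf ?_ haC)
  · rw [← integral_const_mul]
    exact integral_mono ((hf k).const_mul c)
      ((hf k).bdd_mul (ha k) (ae_of_all _ (haC k)))
      fun x => mul_le_mul_of_nonneg_right (hca k x) (hf0 k x)
  · simpa only [abs_of_nonneg (hf0 _ _)] using hfs

theorem tsum_integral_mul_sub_mul (c d : ℝ) (ha : ∀ k, AEStronglyMeasurable (a k) μ)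
    (haC : ∀ k x, |a k x| ≤ C) (hf : ∀ k, Integrable (f k) μ) (hg : ∀ k, Integrable (g k) μ)
    (hfs : Summable fun k => ∫ x, |f k x| ∂μ) (hgs : Summable fun k => ∫ x, |g k x| ∂μ) :
    ∑' k, ∫ x, a k x * (c * f k x - g k x * d) ∂μ =
      c * ∑' k, ∫ x, a k x * f k x ∂μ - d * ∑' k, ∫ x, a k x * g k x ∂μ := by
  have hint (h : ι → α → ℝ) (hh : ∀ k, Integrable (h k) μ) k :=
    (hh k).bdd_mul (ha k) (ae_of_all _ (haC k))
  have hsplit k : ∫ x, a k x * (c * f k x - g k x * d) ∂μ =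
      c * ∫ x, a k x * f k x ∂μ - d * ∫ x, a k x * g k x ∂μ := by
    rw [← integral_const_mul, ← integral_const_mul, ← integral_sub]
    · congr 1; ext x; ring
    · exact (hint f hf k).const_mul c
    · exact (hint g hg k).const_mul d
  rw [tsum_congr hsplit, ((summable_integral_mul hf hfs haC).mul_left c).tsum_sub
    ((summable_integral_mul hg hgs haC).mul_left d), tsum_mul_left, tsum_mul_left]

end BoundedKernel

theorem integrable_maxwellian_s13 {m : ℝ} (hm : 0 < m) (e Z : ℝ) :
    Integrable fun p : ℝ => exp (-(p ^ 2 / (2 * m) + e)) / (√(2 * π * m) * Z) := by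
  refine (((integrable_exp_neg_mul_sq (b := 1 / (2 * m)) (by positivity)).mul_const
    (exp (-e))).div_const (√(2 * π * m) * Z)).congr (ae_of_all _ fun p => ?_)
  dsimp only
  rw [← exp_add]
  ring_nf

theorem maxwellian_pos_s13 {m ε : ℕ → ℝ} (hm : ∀ n, 0 < m n) {Z : ℝ} {M : ℕ → ℝ → ℝ}
    (hM : ∀ n p, M n p = exp (-(p ^ 2 / (2 * m n) + ε n)) / (√(2 * π * m n) * Z))
    (hMnorm : ∑' n, ∫ p, M n p = 1) (n : ℕ) (p : ℝ) : 0 < M n p := by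
  have hZ : 0 < Z := by
    by_contra! hZ
    have hM0 k p : M k p ≤ 0 := (hM k p).trans_le <| div_nonpos_of_nonneg_of_nonpos
      (exp_pos _).le (mul_nonpos_of_nonneg_of_nonpos (sqrt_nonneg _) hZ)
    have : ∑' k, ∫ p, M k p ≤ 0 := tsum_nonpos fun k => integral_nonpos (hM0 k)
    linarith
  rw [hM]
  have := hm n
  positivity

theorem abs_le_of_sub_mul_eq {θ ν M S p m c K : ℝ} (hc : 0 < c) (hν : c ≤ ν) (hM : 0 ≤ M)
    (hm : 0 < m) (hS : |S| ≤ K) (hK : 1 / m ≤ K) (h : M * S - θ * ν = -(p / m) * M) :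
    |θ| ≤ K / c * (1 + |p|) * M := by
  have hθν : θ * ν = M * S + p / m * M := by linarith
  have hp : |p / m| ≤ K * |p| := by
    rw [abs_div, abs_of_pos hm, div_eq_mul_one_div, mul_comm]
    exact mul_le_mul_of_nonneg_right hK (abs_nonneg p)
  have key : c * |θ| ≤ K * (1 + |p|) * M := calc
    c * |θ| ≤ ν * |θ| := mul_le_mul_of_nonneg_right hν (abs_nonneg θ)
    _ = |θ * ν| := by rw [abs_mul, abs_of_nonneg (hc.le.trans hν), mul_comm]
    _ ≤ M * |S| + |p / m| * M := by
      rw [hθν]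
      refine (abs_add_le _ _).trans_eq ?_
      rw [abs_mul, abs_mul, abs_of_nonneg hM]
    _ ≤ M * K + K * |p| * M := by gcongr
    _ = K * (1 + |p|) * M := by ring
  rw [div_mul_eq_mul_div, div_mul_eq_mul_div, le_div_iff₀ hc]
  linarith

theorem stmt13_general
    (m ε : ℕ → ℝ)
    (hm : ∀ n, 0 < m n)
    (Z : ℝ)
    (M : ℕ → ℝ → ℝ)
    (hM : ∀ n p, M n p =
      Real.exp (-(p ^ 2 / (2 * m n) + ε n)) / (Real.sqrt (2 * Real.pi * m n) * Z))
    (hMnorm : (∑' n, ∫ p, M n p) = 1)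
    (α : ℕ → ℕ → ℝ → ℝ → ℝ)
    (hαmeas : ∀ n n', Measurable fun q : ℝ × ℝ => α n n' q.1 q.2)
    (α₁ α₂ : ℝ) (hα₁ : 0 < α₁)
    (hbd : ∀ n n' p p', α₁ ≤ α n n' p p' ∧ α n n' p p' ≤ α₂)
    (Q : (ℕ → ℝ → ℝ) → ℕ → ℝ → ℝ)
    (hQ : ∀ f n p, Q f n p =
      ∑' n', ∫ p', α n n' p p' * (M n p * f n' p' - M n' p' * f n p))
    (memL2M : (ℕ → ℝ → ℝ) → Prop)
    (hmem : ∀ f, memL2M f ↔ (∀ n, Measurable (f n)) ∧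
      (∀ n, Integrable fun p => f n p ^ 2 / M n p) ∧
      (Summable fun n => ∫ p, f n p ^ 2 / M n p))
    (nrm : (ℕ → ℝ → ℝ) → ℝ)
    (hnrm : ∀ f, nrm f = (∑' n, ∫ p, f n p ^ 2 / M n p) ^ ((1 : ℝ) / 2))
    (Θ : ℕ → ℝ → ℝ) (hΘmem : memL2M Θ)
    (hΘeq : ∀ n, ∀ᵐ p ∂(volume : Measure ℝ), Q Θ n p = -(p / m n) * M n p) :
    ∀ n, ∃ C : ℝ, C = max (α₂ * nrm Θ) (1 / m n) / α₁ ∧ 0 ≤ C ∧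
      ∀ᵐ p ∂(volume : Measure ℝ), |Θ n p| ≤ C * (1 + |p|) * M n p := by
  intro n
  obtain ⟨hΘmeas, hΘw, hΘws⟩ := (hmem Θ).1 hΘmem
  have hMpos := maxwellian_pos_s13 hm hM hMnorm
  have hMint k : Integrable (M k) := by
    simpa only [← hM] using integrable_maxwellian_s13 (hm k) (ε k) Z
  have hMs : Summable fun k => ∫ p, M k p := summable_of_tsum_ne_zero (hMnorm ▸ one_ne_zero)
  have hΘint k : Integrable (Θ k) :=
    integrable_of_integrable_sq_div_s13 (hΘmeas k).aestronglyMeasurable (hMpos k) (hMint k) (hΘw k)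
  obtain ⟨hΘs, hΘl1⟩ := summable_integral_abs_and_tsum_le_sqrt
    (fun k => (hΘmeas k).aestronglyMeasurable) hMpos hMint hMnorm hΘw hΘws
  rw [sqrt_eq_rpow, ← hnrm] at hΘl1
  have hαabs p k p' : |α n k p p'| ≤ α₂ :=
    abs_le.2 ⟨by linarith [hbd n k p p'], (hbd n k p p').2⟩
  have hα₂ : 0 ≤ α₂ := (abs_nonneg _).trans (hαabs 0 0 0)
  refine ⟨_, rfl, div_nonneg ((one_div_nonneg.2 (hm n).le).trans (le_max_right _ _)) hα₁.le, ?_⟩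
  filter_upwards [hΘeq n] with p hp
  have hαsm k : AEStronglyMeasurable (α n k p) :=
    ((hαmeas n k).comp measurable_prodMk_left).aestronglyMeasurable
  rw [hQ, tsum_integral_mul_sub_mul _ _ hαsm (hαabs p) hΘint hMint hΘs
    (by simpa only [abs_of_pos (hMpos _ _)] using hMs)] at hp
  refine abs_le_of_sub_mul_eq hα₁ ?_ (hMpos n p).le (hm n) ?_ (le_max_right _ _) hp
  · simpa only [hMnorm, mul_one] using mul_tsum_integral_le_tsum_integral_mul hαsm
      (fun k p' => (hbd n k p p').1) (hαabs p) hMint (fun k p => (hMpos k p).le) hMs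
  · exact (abs_tsum_integral_mul_le hΘint hΘs (hαabs p)).trans <|
      (mul_le_mul_of_nonneg_left hΘl1 hα₂).trans (le_max_left _ _)

theorem stmt13
    (m ε : ℕ → ℝ)
    (hm : ∀ n, 0 < m n)
    (hε : Summable fun n => Real.exp (-ε n))
    (Z : ℝ) (hZ : Z = ∑' n, Real.exp (-ε n))
    (M : ℕ → ℝ → ℝ)
    (hM : ∀ n p, M n p =
      Real.exp (-(p ^ 2 / (2 * m n) + ε n)) / (Real.sqrt (2 * Real.pi * m n) * Z))
    (hMnorm : (∑' n, ∫ p, M n p) = 1)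
    (α : ℕ → ℕ → ℝ → ℝ → ℝ)
    (hαmeas : ∀ n n', Measurable fun q : ℝ × ℝ => α n n' q.1 q.2)
    (α₁ α₂ : ℝ) (hα₁ : 0 < α₁) (hα₁₂ : α₁ ≤ α₂)
    (hsym : ∀ n n' p p', α n n' p p' = α n' n p' p)
    (hbd : ∀ n n' p p', α₁ ≤ α n n' p p' ∧ α n n' p p' ≤ α₂)
    (Q : (ℕ → ℝ → ℝ) → ℕ → ℝ → ℝ)
    (hQ : ∀ f n p, Q f n p =
      ∑' n', ∫ p', α n n' p p' * (M n p * f n' p' - M n' p' * f n p))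
    (memL2M : (ℕ → ℝ → ℝ) → Prop)
    (hmem : ∀ f, memL2M f ↔ (∀ n, Measurable (f n)) ∧
      (∀ n, Integrable fun p => f n p ^ 2 / M n p) ∧
      (Summable fun n => ∫ p, f n p ^ 2 / M n p))
    (nrm : (ℕ → ℝ → ℝ) → ℝ)
    (hnrm : ∀ f, nrm f = (∑' n, ∫ p, f n p ^ 2 / M n p) ^ ((1 : ℝ) / 2))
    (hεm : Summable fun n => Real.exp (-ε n) / m n)
    (Θ : ℕ → ℝ → ℝ) (hΘmem : memL2M Θ)
    (hΘeq : ∀ n, ∀ᵐ p ∂(volume : Measure ℝ), Q Θ n p = -(p / m n) * M n p) :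
    ∀ n, ∃ C : ℝ, C = max (α₂ * nrm Θ) (1 / m n) / α₁ ∧ 0 ≤ C ∧
      ∀ᵐ p ∂(volume : Measure ℝ), |Θ n p| ≤ C * (1 + |p|) * M n p :=
  stmt13_general m ε hm Z M hM hMnorm α hαmeas α₁ α₂ hα₁ hbd Q hQ memL2M hmem nrm hnrm Θ hΘmem hΘeq
end

section
/- (Lemma 3.2 (ii): Lipschitz continuity of S.) For every R > 0 there exists a constant C ≥ 0, depending only on C₀, K, the sequence E, and R, such that for all V, Ṽ ∈ L²(ω_z) with V ≥ 0 and Ṽ ≥ 0 almost everywhere and ‖V‖_{L²(ω_z)} ≤ R, ‖Ṽ‖_{L²(ω_z)} ≤ R, one has |S[V] z − S[Ṽ] z| ≤ C * ‖V − Ṽ‖_{L²(ω_z)} for almost every z ∈ ω_z; consequently ‖S[V] − S[Ṽ]‖_{L²(ω_z)} ≤ C' * ‖V − Ṽ‖_{L²(ω_z)} for a constant C' depending only on C₀, K, E, R and the measure of ω_z. -/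
open MeasureTheory Real

/-!
`S[V]` is a quotient of two series in `exp (-(E n + V_n))`. Cauchy–Schwarz together with
`g_n ^ 2 ≤ C₀ (E n + K) ^ 2 g_n` and `∫ g_n = 1` gives `0 ≤ V_n`, `V_0 ≤ R √C₀ (E 0 + K)` and
`|V_n - Ṽ_n| ≤ √C₀ (E n + K) ‖V - Ṽ‖₂`. As `x ↦ exp (-x)` is 1-Lipschitz on `[0, ∞)`, both series
then move by at most `‖V - Ṽ‖₂` times a polynomial moment `∑ (E n + K) ^ j exp (-E n)`, `j ≤ 3`,
which is finite because `(x + K) ^ j exp (-x / 2)` is bounded, while the partition function stays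
above its first term. The `L²` bound follows from the pointwise one since `ω` has finite measure.
-/

lemma abs_exp_neg_sub_exp_neg_le {a b : ℝ} (ha : 0 ≤ a) (hb : 0 ≤ b) :
    |exp (-a) - exp (-b)| ≤ |a - b| := by
  wlog hab : a ≤ b generalizing a b
  · rw [abs_sub_comm, abs_sub_comm a]; exact this hb ha (le_of_not_ge hab)
  have hfactor : exp (-a) - exp (-b) = exp (-a) * (1 - exp (-(b - a))) := by
    rw [mul_sub, ← exp_add]; ring_nf
  rw [abs_of_nonneg (sub_nonneg.2 (exp_le_exp.2 (neg_le_neg hab))), abs_sub_comm,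
    abs_of_nonneg (sub_nonneg.2 hab), hfactor]
  calc exp (-a) * (1 - exp (-(b - a))) ≤ 1 - exp (-(b - a)) :=
        mul_le_of_le_one_left (sub_nonneg.2 (exp_le_one_iff.2 (by linarith)))
          (exp_le_one_iff.2 (by linarith))
    _ ≤ b - a := by linarith [one_sub_le_exp_neg (b - a)]

lemma abs_exp_neg_add_sub_exp_neg_add_le (e : ℝ) {u v : ℝ} (hu : 0 ≤ u) (hv : 0 ≤ v) :
    |exp (-(e + u)) - exp (-(e + v))| ≤ exp (-e) * |u - v| := by
  simp only [neg_add, exp_add, ← mul_sub, abs_mul, abs_of_pos (exp_pos _)]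
  exact mul_le_mul_of_nonneg_left (abs_exp_neg_sub_exp_neg_le hu hv) (exp_pos _).le

lemma abs_div_sub_div_le {a b x y m A B D : ℝ} (hm : 0 < m) (hx : m ≤ x) (hy : m ≤ y)
    (hab : |a - b| ≤ A) (hb : |b| ≤ B) (hxy : |x - y| ≤ D) :
    |a / x - b / y| ≤ A / m + B * D / m ^ 2 := by
  have hx0 : 0 < x := hm.trans_le hx
  have hy0 : 0 < y := hm.trans_le hy
  have hsplit : a / x - b / y = (a - b) / x + b * (y - x) / (x * y) := by
    field_simp; ring
  have hfirst : |(a - b) / x| ≤ A / m := by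
    rw [abs_div, abs_of_pos hx0]
    exact div_le_div₀ ((abs_nonneg _).trans hab) hab hm hx
  have hsecond : |b * (y - x) / (x * y)| ≤ B * D / m ^ 2 := by
    rw [abs_div, abs_mul, abs_of_pos (mul_pos hx0 hy0), abs_sub_comm, sq]
    exact div_le_div₀ (mul_nonneg ((abs_nonneg _).trans hb) ((abs_nonneg _).trans hxy))
      (mul_le_mul hb hxy (abs_nonneg _) ((abs_nonneg _).trans hb)) (mul_pos hm hm)
      (mul_le_mul hx hy hm.le hx0.le)
  rw [hsplit]
  exact (abs_add_le _ _).trans (add_le_add hfirst hsecond)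

lemma pow_mul_exp_neg_le {x K : ℝ} (hxK : 0 ≤ x + K) (j : ℕ) :
    (x + K) ^ j * exp (-x) ≤ 2 ^ j * j.factorial * exp (K / 2) * exp (-(1 / 2) * x) := by
  have hfact := pow_div_factorial_le_exp ((x + K) / 2) (by positivity) j
  rw [div_le_iff₀ (by positivity)] at hfact
  calc (x + K) ^ j * exp (-x) = 2 ^ j * ((x + K) / 2) ^ j * exp (-x) := by
        rw [div_pow]; field_simp
    _ ≤ 2 ^ j * (exp ((x + K) / 2) * j.factorial) * exp (-x) := by gcongr
    _ = 2 ^ j * j.factorial * exp (K / 2) * exp (-(1 / 2) * x) := by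
        rw [mul_comm (exp _), mul_assoc, mul_assoc, ← exp_add, mul_assoc, ← exp_add]
        ring_nf

lemma summable_pow_mul_exp_neg {E : ℕ → ℝ} {K : ℝ} (hEK : ∀ n, 0 ≤ E n + K)
    (hsum : Summable fun n => exp (-(1 / 2) * E n)) (j : ℕ) :
    Summable fun n => (E n + K) ^ j * exp (-E n) :=
  .of_nonneg_of_le (fun n => mul_nonneg (pow_nonneg (hEK n) j) (exp_pos _).le)
    (fun n => pow_mul_exp_neg_le (hEK n) j) (hsum.mul_left _)

lemma abs_tsum_sub_tsum_le {f f' b : ℕ → ℝ} {c : ℝ} (hf : Summable f) (hf' : Summable f')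
    (hb : Summable b) (h : ∀ n, |f n - f' n| ≤ c * b n) :
    |∑' n, f n - ∑' n, f' n| ≤ c * ∑' n, b n := by
  rw [← hf.tsum_sub hf', ← tsum_mul_left]
  exact tsum_of_norm_bounded (f := fun n => f n - f' n) (hb.mul_left c).hasSum h

noncomputable def expMoment (E : ℕ → ℝ) (K : ℝ) (j : ℕ) : ℝ := ∑' n, (E n + K) ^ j * exp (-E n)

lemma expMoment_nonneg {E : ℕ → ℝ} {K : ℝ} (hEK : ∀ n, 0 ≤ E n + K) (j : ℕ) :
    0 ≤ expMoment E K j :=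
  tsum_nonneg fun n => mul_nonneg (pow_nonneg (hEK n) j) (exp_pos _).le

/-- The constant produced by `abs_div_sub_div_le` with `m = exp (-(E 0 + ρ))`, the first term of
the partition function of a potential `u` with `u 0 ≤ ρ`. -/
noncomputable def gibbsLipschitzConst (E : ℕ → ℝ) (K C₀ ρ : ℝ) : ℝ :=
  C₀ * expMoment E K 3 / exp (-(E 0 + ρ)) +
    C₀ * expMoment E K 2 * expMoment E K 1 / exp (-(E 0 + ρ)) ^ 2

lemma gibbsLipschitzConst_nonneg {E : ℕ → ℝ} {K C₀ : ℝ} (hEK : ∀ n, 0 ≤ E n + K) (hC₀ : 0 ≤ C₀)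
    (ρ : ℝ) : 0 ≤ gibbsLipschitzConst E K C₀ ρ := by
  have h1 := expMoment_nonneg hEK 1
  have h2 := expMoment_nonneg hEK 2
  have h3 := expMoment_nonneg hEK 3
  unfold gibbsLipschitzConst
  positivity

section GibbsQuotient

variable {E u v γ : ℕ → ℝ} {K C₀ δ : ℝ}

lemma summable_exp_neg_add (hE : Summable fun n => exp (-E n)) (hu : ∀ n, 0 ≤ u n) :
    Summable fun n => exp (-(E n + u n)) :=
  .of_nonneg_of_le (fun n => (exp_pos _).le) (fun n => exp_le_exp.2 (by linarith [hu n])) hE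

lemma abs_tsum_exp_neg_add_sub_le (hmom : ∀ j : ℕ, Summable fun n => (E n + K) ^ j * exp (-E n))
    (hu : ∀ n, 0 ≤ u n) (hv : ∀ n, 0 ≤ v n) (huv : ∀ n, |u n - v n| ≤ δ * (E n + K)) :
    |∑' n, exp (-(E n + u n)) - ∑' n, exp (-(E n + v n))| ≤ δ * expMoment E K 1 := by
  have hE : Summable fun n => exp (-E n) := by simpa using hmom 0
  refine abs_tsum_sub_tsum_le (summable_exp_neg_add hE hu) (summable_exp_neg_add hE hv) (hmom 1)
    fun n => ?_
  calc |exp (-(E n + u n)) - exp (-(E n + v n))| ≤ exp (-E n) * (δ * (E n + K)) :=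
        (abs_exp_neg_add_sub_exp_neg_add_le _ (hu n) (hv n)).trans
          (mul_le_mul_of_nonneg_left (huv n) (exp_pos _).le)
    _ = δ * ((E n + K) ^ 1 * exp (-E n)) := by ring

lemma exp_neg_add_mul_le (hu : ∀ n, 0 ≤ u n) (hγ : ∀ n, 0 ≤ γ n)
    (hγle : ∀ n, γ n ≤ C₀ * (E n + K) ^ 2) (n : ℕ) :
    exp (-(E n + u n)) * γ n ≤ C₀ * ((E n + K) ^ 2 * exp (-E n)) := by
  calc exp (-(E n + u n)) * γ n ≤ exp (-E n) * (C₀ * (E n + K) ^ 2) :=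
        mul_le_mul (exp_le_exp.2 (by linarith [hu n])) (hγle n) (hγ n) (exp_pos _).le
    _ = C₀ * ((E n + K) ^ 2 * exp (-E n)) := by ring

lemma summable_exp_neg_add_mul (hmom : ∀ j : ℕ, Summable fun n => (E n + K) ^ j * exp (-E n))
    (hu : ∀ n, 0 ≤ u n) (hγ : ∀ n, 0 ≤ γ n) (hγle : ∀ n, γ n ≤ C₀ * (E n + K) ^ 2) :
    Summable fun n => exp (-(E n + u n)) * γ n :=
  .of_nonneg_of_le (fun n => mul_nonneg (exp_pos _).le (hγ n))
    (exp_neg_add_mul_le hu hγ hγle) ((hmom 2).mul_left C₀)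

lemma abs_tsum_exp_neg_add_mul_le (hmom : ∀ j : ℕ, Summable fun n => (E n + K) ^ j * exp (-E n))
    (hu : ∀ n, 0 ≤ u n) (hγ : ∀ n, 0 ≤ γ n) (hγle : ∀ n, γ n ≤ C₀ * (E n + K) ^ 2) :
    |∑' n, exp (-(E n + u n)) * γ n| ≤ C₀ * expMoment E K 2 := by
  rw [abs_of_nonneg (tsum_nonneg fun n => mul_nonneg (exp_pos _).le (hγ n)), expMoment,
    ← tsum_mul_left]
  exact (summable_exp_neg_add_mul hmom hu hγ hγle).tsum_le_tsum (exp_neg_add_mul_le hu hγ hγle)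
    ((hmom 2).mul_left C₀)

lemma abs_tsum_exp_neg_add_mul_sub_le
    (hmom : ∀ j : ℕ, Summable fun n => (E n + K) ^ j * exp (-E n))
    (hu : ∀ n, 0 ≤ u n) (hv : ∀ n, 0 ≤ v n) (huv : ∀ n, |u n - v n| ≤ δ * (E n + K))
    (hγ : ∀ n, 0 ≤ γ n) (hγle : ∀ n, γ n ≤ C₀ * (E n + K) ^ 2) :
    |∑' n, exp (-(E n + u n)) * γ n - ∑' n, exp (-(E n + v n)) * γ n| ≤
      δ * C₀ * expMoment E K 3 := by
  refine abs_tsum_sub_tsum_le (summable_exp_neg_add_mul hmom hu hγ hγle)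
    (summable_exp_neg_add_mul hmom hv hγ hγle) (hmom 3) fun n => ?_
  rw [← sub_mul, abs_mul, abs_of_nonneg (hγ n)]
  calc |exp (-(E n + u n)) - exp (-(E n + v n))| * γ n
      ≤ (exp (-E n) * (δ * (E n + K))) * (C₀ * (E n + K) ^ 2) := by
        refine mul_le_mul ((abs_exp_neg_add_sub_exp_neg_add_le _ (hu n) (hv n)).trans
          (mul_le_mul_of_nonneg_left (huv n) (exp_pos _).le)) (hγle n) (hγ n) ?_
        exact mul_nonneg (exp_pos _).le ((abs_nonneg _).trans (huv n))
    _ = δ * C₀ * ((E n + K) ^ 3 * exp (-E n)) := by ring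

lemma abs_gibbs_sub_le {ρ : ℝ}
    (hmom : ∀ j : ℕ, Summable fun n => (E n + K) ^ j * exp (-E n))
    (hu : ∀ n, 0 ≤ u n) (hv : ∀ n, 0 ≤ v n) (huρ : u 0 ≤ ρ) (hvρ : v 0 ≤ ρ)
    (huv : ∀ n, |u n - v n| ≤ δ * (E n + K))
    (hγ : ∀ n, 0 ≤ γ n) (hγle : ∀ n, γ n ≤ C₀ * (E n + K) ^ 2) :
    |(∑' n, exp (-(E n + u n)) * γ n) / ∑' n, exp (-(E n + u n)) -
        (∑' n, exp (-(E n + v n)) * γ n) / ∑' n, exp (-(E n + v n))| ≤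
      gibbsLipschitzConst E K C₀ ρ * δ := by
  have hE : Summable fun n => exp (-E n) := by simpa using hmom 0
  have hZ : ∀ w : ℕ → ℝ, (∀ n, 0 ≤ w n) → w 0 ≤ ρ →
      exp (-(E 0 + ρ)) ≤ ∑' n, exp (-(E n + w n)) := fun w hw hwρ =>
    (exp_le_exp.2 (by linarith)).trans
      ((summable_exp_neg_add hE hw).le_tsum 0 fun _ _ => (exp_pos _).le)
  calc _ ≤ δ * C₀ * expMoment E K 3 / exp (-(E 0 + ρ)) +
        C₀ * expMoment E K 2 * (δ * expMoment E K 1) / exp (-(E 0 + ρ)) ^ 2 :=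
        abs_div_sub_div_le (exp_pos _) (hZ u hu huρ) (hZ v hv hvρ)
          (abs_tsum_exp_neg_add_mul_sub_le hmom hu hv huv hγ hγle)
          (abs_tsum_exp_neg_add_mul_le hmom hv hγ hγle) (abs_tsum_exp_neg_add_sub_le hmom hu hv huv)
    _ = gibbsLipschitzConst E K C₀ ρ * δ := by unfold gibbsLipschitzConst; ring

end GibbsQuotient

section L2

variable {α : Type*} [MeasurableSpace α] {μ : Measure α}

lemma abs_integral_mul_le_sqrt_mul_sqrt {f h : α → ℝ} (hf : MemLp f 2 μ) (hh : MemLp h 2 μ) :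
    |∫ x, f x * h x ∂μ| ≤ √(∫ x, f x ^ 2 ∂μ) * √(∫ x, h x ^ 2 ∂μ) := by
  have holder := integral_mul_norm_le_Lp_mul_Lq HolderConjugate.two_two
    (by simpa using hf) (by simpa using hh)
  simp only [norm_eq_abs, rpow_two, sq_abs, ← sqrt_eq_rpow] at holder
  calc |∫ x, f x * h x ∂μ| ≤ ∫ x, |f x| * |h x| ∂μ := by
        simpa only [norm_eq_abs, abs_mul] using norm_integral_le_integral_norm (fun x => f x * h x)
    _ ≤ _ := holder

lemma abs_integral_mul_le_of_sqrt_integral_sq_le {f h : α → ℝ} {a b : ℝ} (hf : MemLp f 2 μ)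
    (hh : MemLp h 2 μ) (ha : √(∫ x, f x ^ 2 ∂μ) ≤ a) (hb : √(∫ x, h x ^ 2 ∂μ) ≤ b) :
    |∫ x, f x * h x ∂μ| ≤ a * b :=
  (abs_integral_mul_le_sqrt_mul_sqrt hf hh).trans
    (mul_le_mul ha hb (sqrt_nonneg _) ((sqrt_nonneg _).trans ha))

lemma integral_sq_le_of_le {g : α → ℝ} {c : ℝ} (hg : Integrable g μ) (hg0 : 0 ≤ᵐ[μ] g)
    (hgc : ∀ᵐ x ∂μ, g x ≤ c) (hg1 : ∫ x, g x ∂μ = 1) : ∫ x, g x ^ 2 ∂μ ≤ c :=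
  calc ∫ x, g x ^ 2 ∂μ ≤ ∫ x, c * g x ∂μ := by
        refine integral_mono_of_nonneg (.of_forall fun x => sq_nonneg _) (hg.const_mul c) ?_
        filter_upwards [hg0, hgc] with x h0 hc
        rw [sq]; exact mul_le_mul_of_nonneg_right hc h0
    _ = c := by rw [integral_const_mul, hg1, mul_one]

lemma abs_integral_mul_sub_integral_mul_le {f f' h : α → ℝ} {b : ℝ} (hf : MemLp f 2 μ)
    (hf' : MemLp f' 2 μ) (hh : MemLp h 2 μ) (hb : √(∫ x, h x ^ 2 ∂μ) ≤ b) :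
    |∫ x, f x * h x ∂μ - ∫ x, f' x * h x ∂μ| ≤ √(∫ x, (f x - f' x) ^ 2 ∂μ) * b := by
  have hint : ∀ u, MemLp u 2 μ → Integrable (fun x => u x * h x) μ :=
    fun u hu => hu.integrable_mul hh
  rw [← integral_sub (hint f hf) (hint f' hf')]
  simp only [← sub_mul]
  exact abs_integral_mul_le_of_sqrt_integral_sq_le (hf.sub hf') hh le_rfl hb

lemma sqrt_integral_sq_le_of_ae_abs_le [IsFiniteMeasure μ] {f : α → ℝ} {c : ℝ} (hc : 0 ≤ c)
    (hf : ∀ᵐ x ∂μ, |f x| ≤ c) : √(∫ x, f x ^ 2 ∂μ) ≤ c * √(μ.real Set.univ) :=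
  calc √(∫ x, f x ^ 2 ∂μ) ≤ √(∫ _, c ^ 2 ∂μ) := by
        refine sqrt_le_sqrt (integral_mono_of_nonneg (.of_forall fun x => sq_nonneg _)
          (integrable_const _) ?_)
        filter_upwards [hf] with x hx
        rw [← sq_abs]; exact pow_le_pow_left₀ (abs_nonneg _) hx 2
    _ = c * √(μ.real Set.univ) := by
        rw [integral_const, smul_eq_mul, sqrt_mul' _ (sq_nonneg c), sqrt_sq hc, mul_comm]

end L2

/-- The density `S[V]`, with `μ` the measure on `ω_z`. -/
noncomputable def gibbsDensity {α : Type*} [MeasurableSpace α] (μ : Measure α) (E : ℕ → ℝ)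
    (g : ℕ → α → ℝ) (V : α → ℝ) (x : α) : ℝ :=
  (∑' n, exp (-(E n + ∫ y, V y * g n y ∂μ)) * g n x) / ∑' n, exp (-(E n + ∫ y, V y * g n y ∂μ))

lemma ae_abs_gibbsDensity_sub_le {α : Type*} [MeasurableSpace α] {μ : Measure α}
    [IsFiniteMeasure μ] {E : ℕ → ℝ} {g : ℕ → α → ℝ} {K C₀ R : ℝ} (hEK : ∀ n, 0 ≤ E n + K)
    (hC₀ : 0 ≤ C₀) (hmom : ∀ j : ℕ, Summable fun n => (E n + K) ^ j * exp (-E n))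
    (hgm : ∀ n, AEStronglyMeasurable (g n) μ) (hg0 : ∀ n, 0 ≤ᵐ[μ] g n)
    (hg1 : ∀ n, ∫ x, g n x ∂μ = 1) (hgle : ∀ n, ∀ᵐ x ∂μ, g n x ≤ C₀ * (E n + K) ^ 2)
    {V W : α → ℝ} (hV : MemLp V 2 μ) (hW : MemLp W 2 μ) (hV0 : 0 ≤ᵐ[μ] V) (hW0 : 0 ≤ᵐ[μ] W)
    (hVR : √(∫ x, V x ^ 2 ∂μ) ≤ R) (hWR : √(∫ x, W x ^ 2 ∂μ) ≤ R) :
    ∀ᵐ x ∂μ, |gibbsDensity μ E g V x - gibbsDensity μ E g W x| ≤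
      gibbsLipschitzConst E K C₀ (R * (√C₀ * (E 0 + K))) * √C₀ *
        √(∫ x, (V x - W x) ^ 2 ∂μ) := by
  have hgL2 : ∀ n, MemLp (g n) 2 μ := fun n => .of_bound (hgm n) _
    (by filter_upwards [hg0 n, hgle n] with z h0 hle; rwa [norm_of_nonneg h0])
  have hgnorm : ∀ n, √(∫ x, g n x ^ 2 ∂μ) ≤ √C₀ * (E n + K) := fun n => by
    rw [← sqrt_sq (hEK n), ← sqrt_mul hC₀]
    exact sqrt_le_sqrt (integral_sq_le_of_le ((hgL2 n).integrable one_le_two) (hg0 n) (hgle n)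
      (hg1 n))
  have hpos : ∀ U : α → ℝ, 0 ≤ᵐ[μ] U → ∀ n, 0 ≤ ∫ x, U x * g n x ∂μ := fun U hU n =>
    integral_nonneg_of_ae (by filter_upwards [hU, hg0 n] with z h1 h2 using mul_nonneg h1 h2)
  have hbound : ∀ U : α → ℝ, MemLp U 2 μ → √(∫ x, U x ^ 2 ∂μ) ≤ R →
      ∫ x, U x * g 0 x ∂μ ≤ R * (√C₀ * (E 0 + K)) := fun U hU hUR =>
    (le_abs_self _).trans (abs_integral_mul_le_of_sqrt_integral_sq_le hU (hgL2 0) hUR (hgnorm 0))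
  have hdiff : ∀ n, |∫ x, V x * g n x ∂μ - ∫ x, W x * g n x ∂μ| ≤
      √(∫ x, (V x - W x) ^ 2 ∂μ) * √C₀ * (E n + K) := fun n => by
    rw [mul_assoc]
    exact abs_integral_mul_sub_integral_mul_le hV hW (hgL2 n) (hgnorm n)
  filter_upwards [ae_all_iff.2 hg0, ae_all_iff.2 hgle] with x hx0 hxle
  refine (abs_gibbs_sub_le hmom (hpos V hV0) (hpos W hW0) (hbound V hV hVR) (hbound W hW hWR)
    hdiff hx0 hxle).trans_eq ?_
  ring

theorem stmt16_general
    (ω : Set (ℝ × ℝ)) (hωbd : Bornology.IsBounded ω)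
    (E : ℕ → ℝ) (hE : ∀ n, 0 ≤ E n)
    (hEsum : ∀ lam : ℝ, 0 < lam → Summable fun n => Real.exp (-lam * E n))
    (g : ℕ → ℝ × ℝ → ℝ) (hgmeas : ∀ n, Measurable (g n))
    (C₀ K : ℝ) (hC₀ : 0 < C₀) (hK : 0 ≤ K)
    (hg0 : ∀ n, ∀ᵐ z ∂(volume.restrict ω), 0 ≤ g n z)
    (hg1 : ∀ n, (∫ z in ω, g n z) = 1)
    (hgbd : ∀ n, ∀ᵐ z ∂(volume.restrict ω), g n z ≤ C₀ * (E n + K) ^ 2)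
    (Vn : ((ℝ × ℝ) → ℝ) → ℕ → ℝ)
    (hVn : ∀ V n, Vn V n = ∫ z in ω, V z * g n z)
    (Zf : ((ℝ × ℝ) → ℝ) → ℝ)
    (hZf : ∀ V, Zf V = ∑' n, Real.exp (-(E n + Vn V n)))
    (S : ((ℝ × ℝ) → ℝ) → (ℝ × ℝ) → ℝ)
    (hS : ∀ V z, S V z = (∑' n, Real.exp (-(E n + Vn V n)) * g n z) / Zf V) :
    ∀ R : ℝ, 0 < R →
      ∃ C : ℝ, 0 ≤ C ∧ ∃ C' : ℝ, 0 ≤ C' ∧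
        ∀ V W : (ℝ × ℝ) → ℝ, Measurable V → Measurable W →
          IntegrableOn (fun z => V z ^ 2) ω → IntegrableOn (fun z => W z ^ 2) ω →
          (∀ᵐ z ∂(volume.restrict ω), 0 ≤ V z) →
          (∀ᵐ z ∂(volume.restrict ω), 0 ≤ W z) →
          (∫ z in ω, V z ^ 2) ^ ((1 : ℝ) / 2) ≤ R →
          (∫ z in ω, W z ^ 2) ^ ((1 : ℝ) / 2) ≤ R →
          (∀ᵐ z ∂(volume.restrict ω),
            |S V z - S W z| ≤ C * (∫ z in ω, (V z - W z) ^ 2) ^ ((1 : ℝ) / 2)) ∧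
          (∫ z in ω, (S V z - S W z) ^ 2) ^ ((1 : ℝ) / 2) ≤
            C' * (∫ z in ω, (V z - W z) ^ 2) ^ ((1 : ℝ) / 2) := by
  intro R _
  set μ := volume.restrict ω
  have : IsFiniteMeasure μ := isFiniteMeasure_restrict.2 hωbd.measure_lt_top.ne
  have hS' : S = gibbsDensity μ E g := by
    ext V z
    simp only [hS, hZf, hVn, gibbsDensity]
  have hEK : ∀ n, 0 ≤ E n + K := fun n => add_nonneg (hE n) hK
  set C := gibbsLipschitzConst E K C₀ (R * (√C₀ * (E 0 + K))) * √C₀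
  have hC : 0 ≤ C := mul_nonneg (gibbsLipschitzConst_nonneg hEK hC₀.le _) (sqrt_nonneg _)
  refine ⟨C, hC, C * √(μ.real Set.univ), by positivity,
    fun V W hVm hWm hV2 hW2 hV0 hW0 hVR hWR => ?_⟩
  simp only [← sqrt_eq_rpow, hS'] at hVR hWR ⊢
  have hpointwise := ae_abs_gibbsDensity_sub_le hEK hC₀.le
    (summable_pow_mul_exp_neg hEK (hEsum _ one_half_pos)) (fun n => (hgmeas n).aestronglyMeasurable)
    hg0 hg1 hgbd ((memLp_two_iff_integrable_sq hVm.aestronglyMeasurable).2 hV2)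
    ((memLp_two_iff_integrable_sq hWm.aestronglyMeasurable).2 hW2) hV0 hW0 hVR hWR
  exact ⟨hpointwise, (sqrt_integral_sq_le_of_ae_abs_le (by positivity) hpointwise).trans_eq
    (by ring)⟩

theorem stmt16
    (ω : Set (ℝ × ℝ)) (hωmeas : MeasurableSet ω) (hωbd : Bornology.IsBounded ω)
    (E : ℕ → ℝ) (hE : ∀ n, 0 ≤ E n)
    (hEsum : ∀ lam : ℝ, 0 < lam → Summable fun n => Real.exp (-lam * E n))
    (g : ℕ → ℝ × ℝ → ℝ) (hgmeas : ∀ n, Measurable (g n))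
    (C₀ K : ℝ) (hC₀ : 0 < C₀) (hK : 0 ≤ K)
    (hg0 : ∀ n, ∀ᵐ z ∂(volume.restrict ω), 0 ≤ g n z)
    (hg1 : ∀ n, (∫ z in ω, g n z) = 1)
    (hgbd : ∀ n, ∀ᵐ z ∂(volume.restrict ω), g n z ≤ C₀ * (E n + K) ^ 2)
    (Vn : ((ℝ × ℝ) → ℝ) → ℕ → ℝ)
    (hVn : ∀ V n, Vn V n = ∫ z in ω, V z * g n z)
    (Zf : ((ℝ × ℝ) → ℝ) → ℝ)
    (hZf : ∀ V, Zf V = ∑' n, Real.exp (-(E n + Vn V n)))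
    (S : ((ℝ × ℝ) → ℝ) → (ℝ × ℝ) → ℝ)
    (hS : ∀ V z, S V z = (∑' n, Real.exp (-(E n + Vn V n)) * g n z) / Zf V) :
    ∀ R : ℝ, 0 < R →
      ∃ C : ℝ, 0 ≤ C ∧ ∃ C' : ℝ, 0 ≤ C' ∧
        ∀ V W : (ℝ × ℝ) → ℝ, Measurable V → Measurable W →
          IntegrableOn (fun z => V z ^ 2) ω → IntegrableOn (fun z => W z ^ 2) ω →
          (∀ᵐ z ∂(volume.restrict ω), 0 ≤ V z) →
          (∀ᵐ z ∂(volume.restrict ω), 0 ≤ W z) →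
          (∫ z in ω, V z ^ 2) ^ ((1 : ℝ) / 2) ≤ R →
          (∫ z in ω, W z ^ 2) ^ ((1 : ℝ) / 2) ≤ R →
          (∀ᵐ z ∂(volume.restrict ω),
            |S V z - S W z| ≤ C * (∫ z in ω, (V z - W z) ^ 2) ^ ((1 : ℝ) / 2)) ∧
          (∫ z in ω, (S V z - S W z) ^ 2) ^ ((1 : ℝ) / 2) ≤
            C' * (∫ z in ω, (V z - W z) ^ 2) ^ ((1 : ℝ) / 2) :=
  stmt16_general ω hωbd E hE hEsum g hgmeas C₀ K hC₀ hK hg0 hg1 hgbd Vn hVn Zf hZf S hS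
end

section
/- (Monotonicity of S, used in the proof of Proposition 3.7.) For all V, Ṽ ∈ L²(ω_z) with V ≥ 0 and Ṽ ≥ 0 almost everywhere, one has ∫ z in ω_z, (S[V] z − S[Ṽ] z) * (V z − Ṽ z) ≤ 0; that is, the map V ↦ S[V] is monotone decreasing in the L²(ω_z) inner-product sense. -/
open MeasureTheory Real

/-!
Write `a n = E n + V_n`, `b n = E n + W_n` and let `p`, `q` be the Gibbs weights
`p n = exp (-a n) / Z[V]`, `q n = exp (-b n) / Z[W]`, so that `S[V] = ∑ p n • g n`. Since
`∫ g n * (V - W) = a n - b n`, exchanging sum and integral (dominated by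
`exp (-E n) * (E n + K) ^ 2`, which is summable) turns the integral into
`∑ (p n - q n) * (a n - b n)`. Now `p n = exp (-(a n + log Z[V]))` and `exp ∘ neg` is decreasing,
so every term of `∑ (p n - q n) * ((a n + log Z[V]) - (b n + log Z[W]))` is nonpositive, while the
constant shift `log Z[V] - log Z[W]` contributes nothing because `∑ p n = ∑ q n = 1`.
-/

lemma exp_neg_sub_exp_neg_mul_sub_nonpos (u v : ℝ) : (exp (-u) - exp (-v)) * (u - v) ≤ 0 :=
  (Antitone.antivary (fun _ _ h => exp_le_exp.2 (neg_le_neg h)) monotone_id).sub_mul_sub_nonpos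
    v u

lemma summable_exp_neg_mul_add_sq {ι : Type*} {E : ι → ℝ} {K : ℝ} (hEK : ∀ i, 0 ≤ E i + K)
    (hE : Summable fun i => exp (-(1 / 2) * E i)) :
    Summable fun i => exp (-E i) * (E i + K) ^ 2 := by
  refine .of_nonneg_of_le (fun i => by positivity) (fun i => ?_) (hE.mul_left (8 * exp (K / 2)))
  have hsq : (E i + K) ^ 2 ≤ 8 * exp ((E i + K) / 2) := by
    have := pow_div_factorial_le_exp _ (div_nonneg (hEK i) zero_le_two) 2
    norm_num [div_pow] at this
    linarith
  calc exp (-E i) * (E i + K) ^ 2 ≤ exp (-E i) * (8 * exp ((E i + K) / 2)) := by gcongr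
    _ = 8 * exp (K / 2) * exp (-(1 / 2) * E i) := by
      rw [mul_left_comm, mul_assoc, ← exp_add, ← exp_add]; ring_nf

section Gibbs

variable {ι : Type*}

noncomputable def gibbsWeight (a : ι → ℝ) (i : ι) : ℝ :=
  exp (-a i) / ∑' j, exp (-a j)

variable {a b : ι → ℝ}

lemma summable_gibbsWeight (ha : Summable fun i => exp (-a i)) : Summable (gibbsWeight a) :=
  ha.div_const _

lemma gibbsWeight_nonneg (a : ι → ℝ) (i : ι) : 0 ≤ gibbsWeight a i := by
  unfold gibbsWeight; positivity

lemma tsum_exp_neg_pos [Nonempty ι] (ha : Summable fun i => exp (-a i)) :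
    0 < ∑' i, exp (-a i) :=
  ha.tsum_pos (fun _ => (exp_pos _).le) (Classical.arbitrary ι) (exp_pos _)

lemma tsum_gibbsWeight [Nonempty ι] (ha : Summable fun i => exp (-a i)) :
    ∑' i, gibbsWeight a i = 1 := by
  simp only [gibbsWeight, tsum_div_const]
  exact div_self (tsum_exp_neg_pos ha).ne'

lemma gibbsWeight_eq_exp [Nonempty ι] (ha : Summable fun i => exp (-a i)) (i : ι) :
    gibbsWeight a i = exp (-(a i + log (∑' j, exp (-a j)))) := by
  rw [gibbsWeight, neg_add, exp_add, exp_neg (log _), exp_log (tsum_exp_neg_pos ha),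
    div_eq_mul_inv]

lemma summable_exp_neg_of_le {e : ι → ℝ} (hea : ∀ i, e i ≤ a i)
    (he : Summable fun i => exp (-e i)) : Summable fun i => exp (-a i) :=
  he.of_nonneg_of_le (fun _ => (exp_pos _).le) fun i => exp_le_exp.2 (neg_le_neg (hea i))

lemma tsum_gibbsWeight_mul (a x : ι → ℝ) :
    ∑' i, gibbsWeight a i * x i = (∑' i, exp (-a i) * x i) / ∑' j, exp (-a j) := by
  rw [← tsum_div_const]
  exact tsum_congr fun i => div_mul_eq_mul_div _ _ _

lemma summable_gibbsWeight_mul {e B : ι → ℝ} (hea : ∀ i, e i ≤ a i) (hB : ∀ i, 0 ≤ B i)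
    (heB : Summable fun i => exp (-e i) * B i) : Summable fun i => gibbsWeight a i * B i := by
  refine .of_nonneg_of_le (fun i => mul_nonneg (gibbsWeight_nonneg a i) (hB i)) (fun i => ?_)
    (heB.div_const (∑' j, exp (-a j)))
  rw [gibbsWeight, div_mul_eq_mul_div]
  gcongr
  exacts [hB i, hea i]

theorem tsum_gibbsWeight_sub_mul_sub_nonpos [Nonempty ι] (ha : Summable fun i => exp (-a i))
    (hb : Summable fun i => exp (-b i))
    (hs : Summable fun i => (gibbsWeight a i - gibbsWeight b i) * (a i - b i)) :
    ∑' i, (gibbsWeight a i - gibbsWeight b i) * (a i - b i) ≤ 0 := by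
  set u := fun i => a i + log (∑' j, exp (-a j))
  set v := fun i => b i + log (∑' j, exp (-b j))
  set c := log (∑' j, exp (-b j)) - log (∑' j, exp (-a j))
  have hsplit : ∀ i, (gibbsWeight a i - gibbsWeight b i) * (a i - b i)
      = (gibbsWeight a i - gibbsWeight b i) * (u i - v i)
        + (gibbsWeight a i - gibbsWeight b i) * c := fun i => by ring
  have hconst : Summable fun i => (gibbsWeight a i - gibbsWeight b i) * c :=
    ((summable_gibbsWeight ha).sub (summable_gibbsWeight hb)).mul_right c
  have hshift : Summable fun i => (gibbsWeight a i - gibbsWeight b i) * (u i - v i) :=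
    (hs.sub hconst).congr fun i => by rw [hsplit]; ring
  calc ∑' i, (gibbsWeight a i - gibbsWeight b i) * (a i - b i)
      = ∑' i, (gibbsWeight a i - gibbsWeight b i) * (u i - v i)
        + ∑' i, (gibbsWeight a i - gibbsWeight b i) * c := by
        rw [← hshift.tsum_add hconst]; exact tsum_congr hsplit
    _ ≤ 0 + 0 := by
      gcongr
      · refine tsum_nonpos fun i => ?_
        rw [gibbsWeight_eq_exp ha, gibbsWeight_eq_exp hb]
        exact exp_neg_sub_exp_neg_mul_sub_nonpos (u i) (v i)
      · rw [tsum_mul_right, (summable_gibbsWeight ha).tsum_sub (summable_gibbsWeight hb),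
          tsum_gibbsWeight ha, tsum_gibbsWeight hb, sub_self, zero_mul]
    _ = 0 := add_zero 0

end Gibbs

lemma integrable_of_sq {α : Type*} [MeasurableSpace α] {μ : Measure α} [IsFiniteMeasure μ]
    {f : α → ℝ} (hf : AEStronglyMeasurable f μ) (h : Integrable (fun x => f x ^ 2) μ) :
    Integrable f μ :=
  ((memLp_two_iff_integrable_sq hf).2 h).integrable one_le_two

theorem hasSum_integral_tsum_mul {ι α : Type*} [Countable ι] [MeasurableSpace α] {μ : Measure α}
    {g : ι → α → ℝ} {w B : ι → ℝ} {φ : α → ℝ}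
    (hg : ∀ i, AEStronglyMeasurable (g i) μ) (hgB : ∀ i, ∀ᵐ x ∂μ, |g i x| ≤ B i)
    (hwB : Summable fun i => |w i| * B i) (hφ : Integrable φ μ) :
    HasSum (fun i => w i * ∫ x, g i x * φ x ∂μ) (∫ x, (∑' i, w i * g i x) * φ x ∂μ) := by
  have hint : ∀ i, Integrable (fun x => w i * g i x * φ x) μ := fun i =>
    ((hφ.bdd_mul (hg i) (hgB i)).const_mul (w i)).congr
      (.of_forall fun x => (mul_assoc _ _ _).symm)
  have hnorm : ∀ i, ∫ x, ‖w i * g i x * φ x‖ ∂μ ≤ |w i| * B i * ∫ x, ‖φ x‖ ∂μ := fun i => by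
    rw [← integral_const_mul]
    refine integral_mono_ae (hint i).norm (hφ.norm.const_mul _) ?_
    filter_upwards [hgB i] with x hx
    rw [norm_mul, norm_mul, Real.norm_eq_abs, Real.norm_eq_abs]
    gcongr
  have := hasSum_integral_of_summable_integral_norm hint <|
    .of_nonneg_of_le (fun i => integral_nonneg fun _ => norm_nonneg _) hnorm
      (hwB.mul_right _)
  simpa only [mul_assoc, integral_const_mul, ← tsum_mul_right] using this

theorem integral_tsum_gibbsWeight_sub_mul_nonpos {ι α : Type*} [Countable ι] [Nonempty ι]
    [MeasurableSpace α] {μ : Measure α} {g : ι → α → ℝ} {e a b B : ι → ℝ} {φ : α → ℝ}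
    (hg : ∀ i, AEStronglyMeasurable (g i) μ) (hgB : ∀ i, ∀ᵐ x ∂μ, |g i x| ≤ B i)
    (hB : ∀ i, 0 ≤ B i) (he : Summable fun i => exp (-e i))
    (heB : Summable fun i => exp (-e i) * B i) (hea : ∀ i, e i ≤ a i) (heb : ∀ i, e i ≤ b i)
    (hφ : Integrable φ μ) (hgφ : ∀ i, ∫ x, g i x * φ x ∂μ = a i - b i) :
    ∫ x, (∑' i, gibbsWeight a i * g i x - ∑' i, gibbsWeight b i * g i x) * φ x ∂μ ≤ 0 := by
  have haB := summable_gibbsWeight_mul hea hB heB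
  have hbB := summable_gibbsWeight_mul heb hB heB
  have hwB : Summable fun i => |gibbsWeight a i - gibbsWeight b i| * B i :=
    (haB.sub hbB).abs.congr fun i => by rw [← sub_mul, abs_mul, abs_of_nonneg (hB i)]
  have hdiff : ∀ᵐ x ∂μ, ∑' i, gibbsWeight a i * g i x - ∑' i, gibbsWeight b i * g i x
      = ∑' i, (gibbsWeight a i - gibbsWeight b i) * g i x := by
    filter_upwards [ae_all_iff.2 hgB] with x hx
    have hsum : ∀ c : ι → ℝ, Summable (fun i => gibbsWeight c i * B i) →
        Summable fun i => gibbsWeight c i * g i x := fun c hc =>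
      hc.of_norm_bounded fun i => by
        rw [norm_mul, Real.norm_of_nonneg (gibbsWeight_nonneg c i)]
        exact mul_le_mul_of_nonneg_left (hx i) (gibbsWeight_nonneg c i)
    rw [← (hsum a haB).tsum_sub (hsum b hbB)]
    exact tsum_congr fun i => (sub_mul _ _ _).symm
  have hswap := hasSum_integral_tsum_mul hg hgB hwB hφ
  simp only [hgφ] at hswap
  calc ∫ x, (∑' i, gibbsWeight a i * g i x - ∑' i, gibbsWeight b i * g i x) * φ x ∂μ
      = ∫ x, (∑' i, (gibbsWeight a i - gibbsWeight b i) * g i x) * φ x ∂μ :=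
        integral_congr_ae (hdiff.mono fun x hx => by simp only [hx])
    _ = ∑' i, (gibbsWeight a i - gibbsWeight b i) * (a i - b i) := hswap.tsum_eq.symm
    _ ≤ 0 := tsum_gibbsWeight_sub_mul_sub_nonpos (summable_exp_neg_of_le hea he)
        (summable_exp_neg_of_le heb he) hswap.summable

theorem stmt17_general
    (ω : Set (ℝ × ℝ)) (hωbd : Bornology.IsBounded ω)
    (E : ℕ → ℝ) (hE : ∀ n, 0 ≤ E n)
    (hEsum : ∀ lam : ℝ, 0 < lam → Summable fun n => Real.exp (-lam * E n))
    (g : ℕ → ℝ × ℝ → ℝ) (hgmeas : ∀ n, Measurable (g n))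
    (C₀ K : ℝ) (hC₀ : 0 < C₀) (hK : 0 ≤ K)
    (hg0 : ∀ n, ∀ᵐ z ∂(volume.restrict ω), 0 ≤ g n z)
    (hgbd : ∀ n, ∀ᵐ z ∂(volume.restrict ω), g n z ≤ C₀ * (E n + K) ^ 2)
    (Vn : ((ℝ × ℝ) → ℝ) → ℕ → ℝ)
    (hVn : ∀ V n, Vn V n = ∫ z in ω, V z * g n z)
    (Zf : ((ℝ × ℝ) → ℝ) → ℝ)
    (hZf : ∀ V, Zf V = ∑' n, Real.exp (-(E n + Vn V n)))
    (S : ((ℝ × ℝ) → ℝ) → (ℝ × ℝ) → ℝ)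
    (hS : ∀ V z, S V z = (∑' n, Real.exp (-(E n + Vn V n)) * g n z) / Zf V) :
    ∀ V W : (ℝ × ℝ) → ℝ, Measurable V → Measurable W →
      IntegrableOn (fun z => V z ^ 2) ω → IntegrableOn (fun z => W z ^ 2) ω →
      (∀ᵐ z ∂(volume.restrict ω), 0 ≤ V z) →
      (∀ᵐ z ∂(volume.restrict ω), 0 ≤ W z) →
      (∫ z in ω, (S V z - S W z) * (V z - W z)) ≤ 0 := by
  intro V W hVm hWm hV2 hW2 hV0 hW0
  have : IsFiniteMeasure (volume.restrict ω) := ⟨by simpa using hωbd.measure_lt_top⟩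
  have hgB : ∀ n, ∀ᵐ z ∂(volume.restrict ω), |g n z| ≤ C₀ * (E n + K) ^ 2 := fun n => by
    filter_upwards [hg0 n, hgbd n] with z h0 h1
    rwa [abs_of_nonneg h0]
  have hEB : Summable fun n => exp (-E n) * (C₀ * (E n + K) ^ 2) :=
    ((summable_exp_neg_mul_add_sq (fun n => add_nonneg (hE n) hK)
      (hEsum _ one_half_pos)).mul_left C₀).congr fun n => by ring
  have hlow : ∀ U : ℝ × ℝ → ℝ, (∀ᵐ z ∂(volume.restrict ω), 0 ≤ U z) →
      ∀ n, E n ≤ E n + Vn U n := fun U hU n => by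
    rw [hVn, le_add_iff_nonneg_right]
    exact integral_nonneg_of_ae (by filter_upwards [hU, hg0 n] with z h1 h2 using mul_nonneg h1 h2)
  have hgm : ∀ n, AEStronglyMeasurable (g n) (volume.restrict ω) :=
    fun n => (hgmeas n).aestronglyMeasurable
  have hV1 := integrable_of_sq hVm.aestronglyMeasurable hV2
  have hW1 := integrable_of_sq hWm.aestronglyMeasurable hW2
  have hmoment : ∀ n, ∫ z in ω, g n z * (V z - W z) = (E n + Vn V n) - (E n + Vn W n) :=
    fun n => by
    simp only [mul_sub, integral_sub (hV1.bdd_mul (hgm n) (hgB n)) (hW1.bdd_mul (hgm n) (hgB n)),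
      hVn, mul_comm]
    ring
  simp only [hS, hZf, ← tsum_gibbsWeight_mul]
  exact integral_tsum_gibbsWeight_sub_mul_nonpos hgm hgB
    (fun n => by positivity) (by simpa using hEsum 1 one_pos) hEB (hlow V hV0) (hlow W hW0)
    (hV1.sub hW1) hmoment

theorem stmt17
    (ω : Set (ℝ × ℝ)) (hωmeas : MeasurableSet ω) (hωbd : Bornology.IsBounded ω)
    (E : ℕ → ℝ) (hE : ∀ n, 0 ≤ E n)
    (hEsum : ∀ lam : ℝ, 0 < lam → Summable fun n => Real.exp (-lam * E n))
    (g : ℕ → ℝ × ℝ → ℝ) (hgmeas : ∀ n, Measurable (g n))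
    (C₀ K : ℝ) (hC₀ : 0 < C₀) (hK : 0 ≤ K)
    (hg0 : ∀ n, ∀ᵐ z ∂(volume.restrict ω), 0 ≤ g n z)
    (hg1 : ∀ n, (∫ z in ω, g n z) = 1)
    (hgbd : ∀ n, ∀ᵐ z ∂(volume.restrict ω), g n z ≤ C₀ * (E n + K) ^ 2)
    (Vn : ((ℝ × ℝ) → ℝ) → ℕ → ℝ)
    (hVn : ∀ V n, Vn V n = ∫ z in ω, V z * g n z)
    (Zf : ((ℝ × ℝ) → ℝ) → ℝ)
    (hZf : ∀ V, Zf V = ∑' n, Real.exp (-(E n + Vn V n)))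
    (S : ((ℝ × ℝ) → ℝ) → (ℝ × ℝ) → ℝ)
    (hS : ∀ V z, S V z = (∑' n, Real.exp (-(E n + Vn V n)) * g n z) / Zf V) :
    ∀ V W : (ℝ × ℝ) → ℝ, Measurable V → Measurable W →
      IntegrableOn (fun z => V z ^ 2) ω → IntegrableOn (fun z => W z ^ 2) ω →
      (∀ᵐ z ∂(volume.restrict ω), 0 ≤ V z) →
      (∀ᵐ z ∂(volume.restrict ω), 0 ≤ W z) →
      (∫ z in ω, (S V z - S W z) * (V z - W z)) ≤ 0 :=
  stmt17_general ω hωbd E hE hEsum g hgmeas C₀ K hC₀ hK hg0 hgbd Vn hVn Zf hZf S hS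
end
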